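/- arXiv:2408.03231 — 7 statements merged into one kernel-verified Lean document; each statement's English description precedes it below -/
import Mathlib

section
/- Let G be a compact topological group with Haar probability measure μ acting continuously and orthogonally on ℝⁿ, let M : ℝⁿ → Sym²(ℝᵈ) be a continuous (affine-linear) map, and define for x ∈ ℝⁿ and square-integrable φ, ψ : G → ℝᵈ the bilinear form M̃(x)(φ,ψ) = ∫_G φ(g⁻¹)ᵀ M(gx) ψ(g⁻¹) dμ(g). Then M̃(x) is positive semidefinite (i.e., M̃(x)(φ,φ) ≥ 0 for all φ ∈ L²(G,ℝᵈ)) if and only if M(gx) ⪰ 0 for all g ∈ G. -/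
open Matrix MeasureTheory

lemma dotProduct_sum' {d m : ℕ} (w : Fin d → ℝ) (f : Fin m → Fin d → ℝ) :
    w ⬝ᵥ (∑ i, f i) = ∑ i, w ⬝ᵥ f i := by
  induction m with
  | zero => simp [dotProduct]
  | succ k ih => rw [Fin.sum_univ_succ, Fin.sum_univ_succ, dotProduct_add, ih fun i => f i.succ]

lemma sum_mulVec' {d m : ℕ} (A : Fin m → Matrix (Fin d) (Fin d) ℝ) (v : Fin d → ℝ) :
    (∑ i, A i) *ᵥ v = ∑ i, (A i) *ᵥ v := by
  induction m with
  | zero => simp [mulVec, dotProduct]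
  | succ k ih => rw [Fin.sum_univ_succ, Fin.sum_univ_succ, Matrix.add_mulVec, ih fun i => A i.succ]

lemma quad_expand' {n d : ℕ} (M0 : Matrix (Fin d) (Fin d) ℝ)
    (M : Fin n → Matrix (Fin d) (Fin d) ℝ) (c : Fin n → ℝ) (v : Fin d → ℝ) :
    v ⬝ᵥ (M0 + ∑ i, c i • M i) *ᵥ v
      = v ⬝ᵥ M0 *ᵥ v + ∑ i, c i * (v ⬝ᵥ (M i) *ᵥ v) := by
  rw [Matrix.add_mulVec, dotProduct_add, sum_mulVec', dotProduct_sum']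
  congr 1
  refine Finset.sum_congr rfl fun i _ => ?_
  rw [Matrix.smul_mulVec, dotProduct_smul]
  rfl

/-- Let `G` be a compact topological group with Haar probability measure `μ`
acting continuously and orthogonally on `ℝⁿ`, and let `M(x) = M₀ + x₁M₁ + ⋯ + xₙMₙ` be an
affine-linear map into symmetric `d×d` matrices.  The bilinear form
`M̃(x)(φ,ψ) = ∫_G φ(g⁻¹)ᵀ M(gx) ψ(g⁻¹) dμ(g)` on `L²(G,ℝᵈ)` is positive semidefinite
(i.e. `M̃(x)(φ,φ) ≥ 0` for all square-integrable `φ`) iff `M(gx) ⪰ 0` for all `g ∈ G`. -/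
theorem averaged_form_posSemidef_iff (n d : ℕ) (G : Type) [Group G] [TopologicalSpace G]
    [IsTopologicalGroup G] [CompactSpace G] [MeasurableSpace G] [BorelSpace G]
    (μ : Measure G) [μ.IsHaarMeasure] [IsProbabilityMeasure μ]
    (ρ : G →* ((Fin n → ℝ) ≃ₗ[ℝ] (Fin n → ℝ)))
    (hcont : Continuous fun p : G × (Fin n → ℝ) => ρ p.1 p.2)
    (horth : ∀ (g : G) (x y : Fin n → ℝ), (ρ g x) ⬝ᵥ (ρ g y) = x ⬝ᵥ y)
    (M0 : Matrix (Fin d) (Fin d) ℝ) (M : Fin n → Matrix (Fin d) (Fin d) ℝ)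
    (hM0 : M0.IsSymm) (hM : ∀ i, (M i).IsSymm)
    (x : Fin n → ℝ) :
    (∀ φ : G → (Fin d → ℝ), MemLp φ 2 μ →
        0 ≤ ∫ g, (φ g⁻¹) ⬝ᵥ ((M0 + ∑ i, (ρ g x) i • M i).mulVec (φ g⁻¹)) ∂μ)
      ↔ ∀ g : G, (M0 + ∑ i, (ρ g x) i • M i).PosSemidef := by
  constructor
  · intro h
    by_contra hcon
    push_neg at hcon
    obtain ⟨g₀, hg₀⟩ := hcon
    -- the matrix is symmetric, so non-PSD means some vector has negative quadratic form
    have hsymm : ∀ g : G, (M0 + ∑ i, (ρ g x) i • M i).IsSymm := fun g => by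
      have hs : ∀ i ∈ Finset.univ, ((ρ g) x i • M i)ᵀ = (ρ g) x i • M i :=
        fun i _ => by rw [Matrix.transpose_smul, (hM i).eq]
      rw [Matrix.IsSymm, Matrix.transpose_add, Matrix.transpose_sum, hM0.eq,
        Finset.sum_congr rfl hs]
    have hv : ∃ v : Fin d → ℝ, v ⬝ᵥ (M0 + ∑ i, (ρ g₀ x) i • M i) *ᵥ v < 0 := by
      by_contra hv
      push_neg at hv
      exact hg₀ (Matrix.PosSemidef.of_dotProduct_mulVec_nonneg (by unfold Matrix.IsHermitian; rw [Matrix.conjTranspose_eq_transpose_of_trivial]; exact hsymm g₀) fun v => by simpa using hv v)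
    obtain ⟨v, hvlt⟩ := hv
    set f : G → ℝ := fun g => v ⬝ᵥ (M0 + ∑ i, (ρ g x) i • M i) *ᵥ v with hf
    have hfc : Continuous f := by
      have h1 : Continuous fun g : G => ρ g x :=
        hcont.comp (continuous_id.prodMk continuous_const)
      simp only [hf, quad_expand']
      exact continuous_const.add (continuous_finset_sum _ fun i _ =>
        ((continuous_apply i).comp h1).mul continuous_const)
    -- choose the open set where f < f g₀ / 2
    set c : ℝ := f g₀ with hc
    have hcneg : c < 0 := hvlt
    set U : Set G := f ⁻¹' (Set.Iio (c / 2)) with hU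
    have hUopen : IsOpen U := isOpen_Iio.preimage hfc
    have hg₀U : g₀ ∈ U := by
      simp only [hU, Set.mem_preimage, Set.mem_Iio]
      linarith
    have hUpos : 0 < μ U := hUopen.measure_pos μ ⟨g₀, hg₀U⟩
    -- test function: indicator of U⁻¹ times v
    set φ : G → (Fin d → ℝ) := (U⁻¹).indicator (fun _ => v) with hφ
    have hUmeas : MeasurableSet U := hUopen.measurableSet
    have hUinvmeas : MeasurableSet (U⁻¹) := hUmeas.inv
    have hφmem : MemLp φ 2 μ := (memLp_const v).indicator hUinvmeas
    have key := h φ hφmem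
    -- the integrand equals the indicator of U of f
    have hpt : ∀ g : G, (φ g⁻¹) ⬝ᵥ ((M0 + ∑ i, (ρ g x) i • M i).mulVec (φ g⁻¹))
        = U.indicator f g := by
      intro g
      by_cases hg : g ∈ U
      · have : g⁻¹ ∈ U⁻¹ := by simpa using hg
        simp [hφ, Set.indicator_of_mem this, Set.indicator_of_mem hg, hf]
      · have : g⁻¹ ∉ U⁻¹ := by simpa using hg
        simp [hφ, Set.indicator_of_notMem this, Set.indicator_of_notMem hg, dotProduct]
    rw [integral_congr_ae (Filter.Eventually.of_forall hpt)] at key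
    have hfint : Integrable f μ :=
      hfc.integrable_of_hasCompactSupport ((isClosed_tsupport f).isCompact)
    rw [integral_indicator hUmeas] at key
    have hUlt : μ U < ⊤ := lt_of_le_of_lt (measure_mono (Set.subset_univ U))
      (by simp [measure_univ])
    have hUtoReal : 0 < (μ U).toReal := ENNReal.toReal_pos hUpos.ne' hUlt.ne
    have hmono : ∫ g in U, f g ∂μ ≤ ∫ _ in U, c / 2 ∂μ := by
      refine setIntegral_mono_on hfint.integrableOn (integrableOn_const hUlt.ne)
        hUmeas fun g hg => ?_
      exact le_of_lt hg
    rw [setIntegral_const] at hmono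
    have : (μ U).toReal • (c / 2) < 0 := by
      rw [smul_eq_mul]
      exact mul_neg_of_pos_of_neg hUtoReal (by linarith)
    exact absurd (lt_of_le_of_lt key (lt_of_le_of_lt hmono this)) (lt_irrefl 0)
  · intro h φ hφ
    refine integral_nonneg fun g => ?_
    simpa using (h g).dotProduct_mulVec_nonneg (φ g⁻¹)
end

section
/- Let S ⊆ ℝⁿ be an algebraic interior with defining polynomial p, and let F₁, …, Fₘ be polynomials whose greatest common divisor is coprime to p. Then the set ∂S \ {a ∈ ∂S : F₁(a) = ⋯ = Fₘ(a) = 0} is Zariski-dense in ∂S. -/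
open MvPolynomial MeasureTheory

lemma zd_continuous_eval {n : ℕ} (g : MvPolynomial (Fin n) ℝ) :
    Continuous fun y : Fin n → ℝ => eval y g := by
  apply MvPolynomial.induction_on g
  · intro r; simpa using continuous_const
  · intro f1 f2 h1 h2; simp; exact h1.add h2
  · intro f i hf; simp; exact hf.mul (continuous_apply i)

lemma zd_eval_cons {k : ℕ} (g : MvPolynomial (Fin (k+1)) ℝ) (t : ℝ) (y : Fin k → ℝ) :
    eval (Fin.cons t y) g
      = eval y (Polynomial.eval (MvPolynomial.C t) (MvPolynomial.finSuccEquiv ℝ k g)) := by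
  rw [eval_eq_eval_mv_eval', Polynomial.eval_map]
  show _ = eval y (Polynomial.eval₂ (RingHom.id _) (MvPolynomial.C t) _)
  rw [Polynomial.hom_eval₂]
  simp

lemma zd_zero_null : ∀ {k : ℕ} (g : MvPolynomial (Fin k) ℝ), g ≠ 0 →
    volume {y : Fin k → ℝ | eval y g = 0} = 0 := by
  intro k
  induction k with
  | zero =>
    intro g hg
    have : {y : Fin 0 → ℝ | eval y g = 0} = ∅ := by
      ext y
      simp only [Set.mem_setOf_eq, Set.mem_empty_iff_false, iff_false]
      intro h0
      apply hg
      apply MvPolynomial.funext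
      intro x
      rw [Subsingleton.elim x y, h0, map_zero]
    rw [this, measure_empty]
  | succ k ih =>
    intro g hg
    set G := MvPolynomial.finSuccEquiv ℝ k g with hGdef
    have hGne : G ≠ 0 := by
      intro h
      exact hg ((MvPolynomial.finSuccEquiv ℝ k).injective (h.trans (map_zero _).symm))
    -- the bad set of t is finite
    have hbadfin : {t : ℝ | Polynomial.eval (MvPolynomial.C t) G = 0}.Finite := by
      obtain ⟨k1, hk1⟩ : ∃ k1, G.coeff k1 ≠ 0 := by
        by_contra hcon
        push_neg at hcon
        exact hGne (Polynomial.ext fun j => by simpa using hcon j)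
      obtain ⟨α, hα⟩ : ∃ α, MvPolynomial.coeff α (G.coeff k1) ≠ 0 := by
        by_contra hcon
        push_neg at hcon
        exact hk1 (MvPolynomial.ext _ _ fun β => by simpa using hcon β)
      set u : Polynomial ℝ := ∑ j ∈ Finset.range (G.natDegree + 1),
        Polynomial.monomial j (MvPolynomial.coeff α (G.coeff j)) with hudef
      have hucoeff : ∀ j, j ∈ Finset.range (G.natDegree + 1) → u.coeff j
          = MvPolynomial.coeff α (G.coeff j) := by
        intro j hj
        rw [hudef, Polynomial.finset_sum_coeff]
        rw [Finset.sum_eq_single j]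
        · simp
        · intro b _ hbj; simp [Polynomial.coeff_monomial, hbj]
        · intro hjn; exact absurd hj hjn
      have hu : u ≠ 0 := by
        intro h
        apply hα
        have hk1mem : k1 ∈ Finset.range (G.natDegree + 1) :=
          Finset.mem_range.2 (Nat.lt_succ_of_le (Polynomial.le_natDegree_of_ne_zero hk1))
        rw [← hucoeff k1 hk1mem, h, Polynomial.coeff_zero]
      refine (Polynomial.finite_setOf_isRoot hu).subset ?_
      intro t ht
      simp only [Set.mem_setOf_eq] at ht
      have h2 : MvPolynomial.coeff α (Polynomial.eval (MvPolynomial.C t) G) = 0 := by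
        rw [ht, MvPolynomial.coeff_zero]
      rw [Polynomial.eval_eq_sum_range] at h2
      rw [MvPolynomial.coeff_sum] at h2
      have h3 : ∀ j ∈ Finset.range (G.natDegree + 1),
          MvPolynomial.coeff α (G.coeff j * MvPolynomial.C t ^ j)
            = MvPolynomial.coeff α (G.coeff j) * t ^ j := by
        intro j _
        rw [← MvPolynomial.C_pow, mul_comm, MvPolynomial.coeff_C_mul, mul_comm]
      rw [Finset.sum_congr rfl h3] at h2
      show Polynomial.eval t u = 0
      rw [hudef, Polynomial.eval_finset_sum]
      simpa [Polynomial.eval_monomial] using h2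
    -- continuity and measurability
    have hcont : Continuous fun z : ℝ × (Fin k → ℝ) => eval (Fin.cons z.1 z.2) g := by
      refine (zd_continuous_eval g).comp ?_
      refine continuous_pi fun i => ?_
      refine Fin.cases ?_ ?_ i
      · simpa using continuous_fst
      · intro j; simp; exact (continuous_apply j).comp continuous_snd
    have hTmeas : MeasurableSet {z : ℝ × (Fin k → ℝ) | eval (Fin.cons z.1 z.2) g = 0} :=
      (isClosed_eq hcont continuous_const).measurableSet
    have hT : (volume : Measure (ℝ × (Fin k → ℝ)))
        {z : ℝ × (Fin k → ℝ) | eval (Fin.cons z.1 z.2) g = 0} = 0 := by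
      rw [Measure.volume_eq_prod, Measure.measure_prod_null hTmeas]
      have hae : ∀ᵐ t : ℝ, Polynomial.eval (MvPolynomial.C t) G ≠ 0 := by
        rw [MeasureTheory.ae_iff]
        push_neg
        simpa using hbadfin.measure_zero volume
      filter_upwards [hae] with t ht
      have hsec : (Prod.mk t ⁻¹' {z : ℝ × (Fin k → ℝ) | eval (Fin.cons z.1 z.2) g = 0})
          = {y : Fin k → ℝ | eval y (Polynomial.eval (MvPolynomial.C t) G) = 0} := by
        ext y
        simp only [Set.mem_preimage, Set.mem_setOf_eq]
        rw [zd_eval_cons]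
      show volume _ = 0
      rw [hsec]
      exact ih _ ht
    -- transfer along the measurable equiv
    have hmp := MeasureTheory.volume_preserving_piFinSuccAbove (fun _ : Fin (k+1) => ℝ) 0
    have hpre := hmp.measure_preimage hTmeas.nullMeasurableSet
    have hset : (⇑(MeasurableEquiv.piFinSuccAbove (fun _ : Fin (k+1) => ℝ) 0)) ⁻¹'
        {z : ℝ × (Fin k → ℝ) | eval (Fin.cons z.1 z.2) g = 0}
        = {y : Fin (k+1) → ℝ | eval y g = 0} := by
      ext f
      simp only [Set.mem_preimage, Set.mem_setOf_eq, MeasurableEquiv.piFinSuccAbove_apply,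
        Fin.insertNthEquiv_symm_apply]
      have : Fin.cons (f 0) ((0 : Fin (k+1)).removeNth f) = f := by
        rw [Fin.removeNth_zero, Fin.cons_self_tail]
      rw [this]
    rw [hset] at hpre
    rw [hpre, hT]

lemma zd_isUnit_constant : ∀ {k : ℕ} (v : MvPolynomial (Fin k) ℝ), IsUnit v →
    ∃ r : ℝ, r ≠ 0 ∧ v = C r := by
  intro k
  induction k with
  | zero =>
    intro v hv
    refine ⟨eval (fun i => (0:ℝ)) v, ?_, ?_⟩
    · intro h0
      obtain ⟨w, hw⟩ := hv.exists_right_inv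
      have := congrArg (eval (fun i => (0:ℝ))) hw
      rw [map_mul, map_one, h0, zero_mul] at this
      exact zero_ne_one this
    · apply MvPolynomial.funext
      intro x
      have : x = fun i => (0:ℝ) := Subsingleton.elim _ _
      simp [this]
  | succ k ih =>
    intro v hv
    have hv' : IsUnit (MvPolynomial.finSuccEquiv ℝ k v) := hv.map _
    rw [Polynomial.isUnit_iff] at hv'
    obtain ⟨r, hr, hCr⟩ := hv'
    obtain ⟨r', hr', hC⟩ := ih r hr
    refine ⟨r', hr', ?_⟩
    have : MvPolynomial.finSuccEquiv ℝ k v = Polynomial.C (C r') := by rw [← hCr, hC]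
    apply (MvPolynomial.finSuccEquiv ℝ k).injective
    rw [this]
    simp [MvPolynomial.finSuccEquiv_apply]

noncomputable def zdTheta {n : ℕ} (x : Fin n → ℝ) :
    MvPolynomial (Fin n) ℝ →ₐ[ℝ] Polynomial (MvPolynomial (Fin n) ℝ) :=
  aeval (fun i => Polynomial.C (X i) * Polynomial.X + Polynomial.C (C (x i)))

lemma zdTheta_eval {n : ℕ} (x u : Fin n → ℝ) (s : ℝ) (g : MvPolynomial (Fin n) ℝ) :
    Polynomial.eval₂ (MvPolynomial.eval u) s (zdTheta x g) = eval (x + s • u) g := by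
  apply MvPolynomial.induction_on g
  · intro r
    simp [zdTheta, MvPolynomial.algebraMap_eq]
  · intro f1 f2 h1 h2
    simp only [map_add, Polynomial.eval₂_add, h1, h2]
  · intro f i hf
    simp only [map_mul, Polynomial.eval₂_mul, hf]
    congr 1
    rw [show (zdTheta x) (X i)
        = Polynomial.C (X i) * Polynomial.X + Polynomial.C (C (x i)) from aeval_X _ i]
    simp only [Polynomial.eval₂_add, Polynomial.eval₂_mul, Polynomial.eval₂_C,
      Polynomial.eval₂_X, eval_X, eval_C, Pi.add_apply, Pi.smul_apply, smul_eq_mul]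
    ring

lemma zdTheta_evalC {n : ℕ} (x : Fin n → ℝ) (c : ℝ) (g : MvPolynomial (Fin n) ℝ) :
    Polynomial.eval (MvPolynomial.C c) (zdTheta x g)
      = aeval (fun i => C c * X i + C (x i)) g := by
  apply MvPolynomial.induction_on g
  · intro r
    simp [zdTheta, MvPolynomial.algebraMap_eq]
  · intro f1 f2 h1 h2
    simp only [map_add, Polynomial.eval_add, h1, h2]
  · intro f i hf
    simp only [map_mul, Polynomial.eval_mul, hf]
    congr 1
    rw [show (zdTheta x) (X i)
        = Polynomial.C (X i) * Polynomial.X + Polynomial.C (C (x i)) from aeval_X _ i]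
    simp only [Polynomial.eval_add, Polynomial.eval_mul, Polynomial.eval_C, Polynomial.eval_X,
      aeval_X]
    ring

lemma zd_aeval_constpoint {n : ℕ} (x : Fin n → ℝ) (g : MvPolynomial (Fin n) ℝ) :
    aeval (R := ℝ) (fun i => C (0:ℝ) * X i + C (x i)) g = C (eval x g) := by
  apply MvPolynomial.induction_on g
  · intro r; simp [MvPolynomial.algebraMap_eq]
  · intro f1 f2 h1 h2; rw [map_add, h1, h2, map_add, MvPolynomial.C_add]
  · intro f i hf
    rw [map_mul, hf, aeval_X]
    rw [show eval x (f * X i) = eval x f * x i from by rw [map_mul, eval_X]]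
    rw [MvPolynomial.C_mul, MvPolynomial.C_0, zero_mul, zero_add]

lemma zdTheta_map_zero {n : ℕ} (x : Fin n → ℝ) (g : MvPolynomial (Fin n) ℝ) :
    Polynomial.map (MvPolynomial.eval (fun _ => (0:ℝ)) : MvPolynomial (Fin n) ℝ →+* ℝ)
      (zdTheta x g) = Polynomial.C (eval x g) := by
  apply MvPolynomial.induction_on g
  · intro r; simp [zdTheta, MvPolynomial.algebraMap_eq]
  · intro f1 f2 h1 h2; simp only [map_add, Polynomial.map_add, h1, h2]
  · intro f i hf
    simp only [map_mul, Polynomial.map_mul, hf]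
    rw [← Polynomial.C_mul]
    congr 1
    simp [zdTheta, aeval_X, Polynomial.map_add, Polynomial.map_mul]

lemma zd_common_dvd_isUnit {n : ℕ} {x : Fin n → ℝ} {g h : MvPolynomial (Fin n) ℝ}
    (hg : eval x g ≠ 0) (hh : eval x h ≠ 0)
    (hcp : ∀ d : MvPolynomial (Fin n) ℝ, d ∣ g → d ∣ h → IsUnit d)
    {K : Polynomial (MvPolynomial (Fin n) ℝ)}
    (hKg : K ∣ zdTheta x g) (hKh : K ∣ zdTheta x h) : IsUnit K := by
  classical
  -- Step 1: each specialization of K at s := C c is a unit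
  have hstep : ∀ c : ℝ, IsUnit (Polynomial.eval (MvPolynomial.C c) K) := by
    intro c
    have hdg : Polynomial.eval (MvPolynomial.C c) K
        ∣ aeval (fun i => C c * X i + C (x i)) g := by
      rw [← zdTheta_evalC]
      exact map_dvd (Polynomial.evalRingHom (MvPolynomial.C c)) hKg
    have hdh : Polynomial.eval (MvPolynomial.C c) K
        ∣ aeval (fun i => C c * X i + C (x i)) h := by
      rw [← zdTheta_evalC]
      exact map_dvd (Polynomial.evalRingHom (MvPolynomial.C c)) hKh
    by_cases hc : c = 0
    · subst hc
      rw [zd_aeval_constpoint] at hdg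
      exact isUnit_of_dvd_unit hdg
        ((isUnit_iff_ne_zero.2 hg).map (MvPolynomial.C : ℝ →+* MvPolynomial (Fin n) ℝ))
    · -- the affine substitution is invertible
      set A : MvPolynomial (Fin n) ℝ →ₐ[ℝ] MvPolynomial (Fin n) ℝ :=
        aeval (fun i => C c * X i + C (x i)) with hA
      set E : MvPolynomial (Fin n) ℝ →ₐ[ℝ] MvPolynomial (Fin n) ℝ :=
        aeval (fun i => C c⁻¹ * X i - C (c⁻¹ * x i)) with hE
      have hEA : E.comp A = AlgHom.id ℝ _ := by
        apply MvPolynomial.algHom_ext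
        intro i
        simp only [AlgHom.comp_apply, hA, hE, aeval_X, map_add, map_mul, aeval_C, AlgHom.id_apply]
        simp only [MvPolynomial.algebraMap_eq]
        rw [mul_sub, ← mul_assoc, ← MvPolynomial.C_mul, mul_inv_cancel₀ hc, MvPolynomial.C_1,
          one_mul, ← MvPolynomial.C_mul]
        rw [← MvPolynomial.C_mul, show c * (c⁻¹ * x i) = x i from by field_simp]
        ring
      have hAE : A.comp E = AlgHom.id ℝ _ := by
        apply MvPolynomial.algHom_ext
        intro i
        simp only [AlgHom.comp_apply, hA, hE, aeval_X, map_sub, map_mul, aeval_C, AlgHom.id_apply]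
        simp only [MvPolynomial.algebraMap_eq]
        rw [mul_add, ← mul_assoc, ← MvPolynomial.C_mul, inv_mul_cancel₀ hc, MvPolynomial.C_1,
          one_mul, ← MvPolynomial.C_mul]
        ring
      set d := Polynomial.eval (MvPolynomial.C c) K with hd
      have hEd : E d ∣ g := by
        have := map_dvd E hdg
        rwa [show E (aeval (fun i => C c * X i + C (x i)) g) = g from by
          have := congrArg (fun φ => φ g) hEA; simpa [hA] using this] at this
      have hEd' : E d ∣ h := by
        have := map_dvd E hdh
        rwa [show E (aeval (fun i => C c * X i + C (x i)) h) = h from by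
          have := congrArg (fun φ => φ h) hEA; simpa [hA] using this] at this
      have : IsUnit (E d) := hcp _ hEd hEd'
      have h2 : IsUnit (A (E d)) := this.map A
      rwa [show A (E d) = d from by
        have := congrArg (fun φ => φ d) hAE; simpa using this] at h2
  -- Step 2: K has coefficients which are constants
  have hconst : ∀ j : ℕ, ∀ α : (Fin n →₀ ℕ), α ≠ 0 →
      MvPolynomial.coeff α (K.coeff j) = 0 := by
    intro j α hα
    -- the univariate polynomial of α-coefficients
    set κ : Polynomial ℝ := ∑ j ∈ Finset.range (K.natDegree + 1),
      Polynomial.monomial j (MvPolynomial.coeff α (K.coeff j)) with hκ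
    have hκeval : ∀ c : ℝ, Polynomial.eval c κ = 0 := by
      intro c
      obtain ⟨r, hr, hrc⟩ := zd_isUnit_constant _ (hstep c)
      have h2 : MvPolynomial.coeff α (Polynomial.eval (MvPolynomial.C c) K) = 0 := by
        rw [hrc, MvPolynomial.coeff_C, if_neg (by exact fun hh0 => hα hh0.symm)]
      rw [Polynomial.eval_eq_sum_range, MvPolynomial.coeff_sum] at h2
      have h3 : ∀ j' ∈ Finset.range (K.natDegree + 1),
          MvPolynomial.coeff α (K.coeff j' * MvPolynomial.C c ^ j')
            = MvPolynomial.coeff α (K.coeff j') * c ^ j' := by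
        intro j' _
        rw [← MvPolynomial.C_pow, mul_comm, MvPolynomial.coeff_C_mul, mul_comm]
      rw [Finset.sum_congr rfl h3] at h2
      rw [hκ, Polynomial.eval_finset_sum]
      simpa [Polynomial.eval_monomial] using h2
    have hκ0 : κ = 0 := by
      apply Polynomial.funext
      intro r
      rw [hκeval r, Polynomial.eval_zero]
    by_cases hj : j ∈ Finset.range (K.natDegree + 1)
    · have : κ.coeff j = MvPolynomial.coeff α (K.coeff j) := by
        rw [hκ, Polynomial.finset_sum_coeff]
        rw [Finset.sum_eq_single j]
        · simp
        · intro b _ hbj; simp [Polynomial.coeff_monomial, hbj]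
        · intro hjn; exact absurd hj hjn
      rw [← this, hκ0, Polynomial.coeff_zero]
    · have : K.coeff j = 0 :=
        Polynomial.coeff_eq_zero_of_natDegree_lt
          (by simpa [Nat.lt_succ_iff, Finset.mem_range] using hj)
      rw [this, MvPolynomial.coeff_zero]
  -- Step 3: K is the image of a univariate real polynomial
  set k0 : Polynomial ℝ := ∑ j ∈ Finset.range (K.natDegree + 1),
    Polynomial.monomial j (MvPolynomial.coeff 0 (K.coeff j)) with hk0
  have hKk0 : K = Polynomial.map (MvPolynomial.C : ℝ →+* MvPolynomial (Fin n) ℝ) k0 := by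
    apply Polynomial.ext
    intro j
    rw [Polynomial.coeff_map]
    have hk0c : k0.coeff j = if j ∈ Finset.range (K.natDegree + 1)
        then MvPolynomial.coeff 0 (K.coeff j) else 0 := by
      rw [hk0, Polynomial.finset_sum_coeff]
      by_cases hj : j ∈ Finset.range (K.natDegree + 1)
      · rw [if_pos hj, Finset.sum_eq_single j]
        · simp
        · intro b _ hbj; simp [Polynomial.coeff_monomial, hbj]
        · intro hjn; exact absurd hj hjn
      · rw [if_neg hj]
        apply Finset.sum_eq_zero
        intro b hb
        have : b ≠ j := by
          intro hbj; exact hj (hbj ▸ hb)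
        simp [Polynomial.coeff_monomial, this]
    rw [hk0c]
    by_cases hj : j ∈ Finset.range (K.natDegree + 1)
    · rw [if_pos hj]
      apply MvPolynomial.ext
      intro β
      by_cases hβ : β = 0
      · subst hβ; simp [MvPolynomial.coeff_C]
      · rw [hconst j β hβ, MvPolynomial.coeff_C, if_neg (fun hh0 => hβ hh0.symm)]
    · rw [if_neg hj, map_zero]
      exact Polynomial.coeff_eq_zero_of_natDegree_lt
        (by simpa [Nat.lt_succ_iff, Finset.mem_range] using hj)
  -- Step 4: k0 divides the constant polynomial C (eval x g), hence is a unit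
  have hχ : (MvPolynomial.eval (fun _ => (0:ℝ)) : MvPolynomial (Fin n) ℝ →+* ℝ).comp
      (MvPolynomial.C : ℝ →+* MvPolynomial (Fin n) ℝ) = RingHom.id ℝ := by
    apply RingHom.ext; intro r; simp
  have hmapK : Polynomial.map (MvPolynomial.eval (fun _ => (0:ℝ)) :
      MvPolynomial (Fin n) ℝ →+* ℝ) K = k0 := by
    rw [hKk0, Polynomial.map_map, hχ, Polynomial.map_id]
  have hk0dvd : k0 ∣ Polynomial.C (eval x g) := by
    rw [← hmapK, ← zdTheta_map_zero x g]
    exact map_dvd (Polynomial.mapRingHom _) hKg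
  have hk0unit : IsUnit k0 :=
    isUnit_of_dvd_unit hk0dvd (Polynomial.isUnit_C.2 (isUnit_iff_ne_zero.2 hg))
  rw [hKk0]
  exact hk0unit.map (Polynomial.mapRingHom (MvPolynomial.C : ℝ →+* MvPolynomial (Fin n) ℝ))

lemma zd_bezout {n : ℕ} {x : Fin n → ℝ} {g h : MvPolynomial (Fin n) ℝ}
    (hg : eval x g ≠ 0) (hh : eval x h ≠ 0)
    (hcp : ∀ d : MvPolynomial (Fin n) ℝ, d ∣ g → d ∣ h → IsUnit d) :
    ∃ (A B : Polynomial (MvPolynomial (Fin n) ℝ)) (d : MvPolynomial (Fin n) ℝ), d ≠ 0 ∧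
      A * zdTheta x g + B * zdTheta x h = Polynomial.C d := by
  classical
  letI : NormalizationMonoid (MvPolynomial (Fin n) ℝ) :=
    UniqueFactorizationMonoid.normalizationMonoid.toNormalizationMonoid
  letI : NormalizedGCDMonoid (MvPolynomial (Fin n) ℝ) :=
    UniqueFactorizationMonoid.toNormalizedGCDMonoid (MvPolynomial (Fin n) ℝ)
  set K := FractionRing (MvPolynomial (Fin n) ℝ) with hK
  set φ : MvPolynomial (Fin n) ℝ →+* K := algebraMap (MvPolynomial (Fin n) ℝ) K with hφ
  have hφinj : Function.Injective φ := IsFractionRing.injective _ _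
  set Gh := zdTheta x g with hGh
  set Hh := zdTheta x h with hHh
  set GK := Polynomial.map φ Gh with hGK
  set HK := Polynomial.map φ Hh with hHK
  have hGh0 : Gh ≠ 0 := by
    intro h0
    have h1 := zdTheta_map_zero x g
    rw [← hGh, h0, Polynomial.map_zero] at h1
    exact hg (Polynomial.C_eq_zero.1 h1.symm)
  have hHh0 : Hh ≠ 0 := by
    intro h0
    have h1 := zdTheta_map_zero x h
    rw [← hHh, h0, Polynomial.map_zero] at h1
    exact hh (Polynomial.C_eq_zero.1 h1.symm)
  have hGK0 : GK ≠ 0 := fun h0 =>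
    hGh0 (Polynomial.map_injective φ hφinj (by rw [Polynomial.map_zero]; exact h0))
  have hcoprime : IsCoprime GK HK := by
    rw [← EuclideanDomain.gcd_isUnit_iff]
    by_contra hgu
    set γ := EuclideanDomain.gcd GK HK with hγ
    have hγ0 : γ ≠ 0 := fun h0 => hGK0 ((EuclideanDomain.gcd_eq_zero_iff.1 h0).1)
    obtain ⟨b, hb⟩ :=
      IsLocalization.integerNormalization_map_to_map (nonZeroDivisors (MvPolynomial (Fin n) ℝ)) γ
    set γ' := IsLocalization.integerNormalization
      (nonZeroDivisors (MvPolynomial (Fin n) ℝ)) γ with hγ'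
    have hbne : ((b : MvPolynomial (Fin n) ℝ)) ≠ 0 := nonZeroDivisors.ne_zero b.2
    have hφb : φ b ≠ 0 := fun h0 => hbne (hφinj (by rw [h0, map_zero]))
    have hCφb : (Polynomial.C (φ b)) ≠ 0 := by simpa [Polynomial.C_eq_zero] using hφb
    have hCφbu : IsUnit (Polynomial.C (φ b)) :=
      Polynomial.isUnit_C.2 (isUnit_iff_ne_zero.2 hφb)
    have hmapγ' : Polynomial.map φ γ' = Polynomial.C (φ b) * γ := by
      rw [hb, Algebra.smul_def]
      congr 1
    have hγ'0 : γ' ≠ 0 := by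
      intro h0
      rw [h0, Polynomial.map_zero] at hmapγ'
      rcases mul_eq_zero.1 hmapγ'.symm with h1 | h1
      · exact hCφb h1
      · exact hγ0 h1
    have hdegγ : 1 ≤ γ.natDegree := by
      by_contra hd
      push_neg at hd
      have h0 : γ.natDegree = 0 := by omega
      have hγC := Polynomial.eq_C_of_natDegree_eq_zero h0
      apply hgu
      rw [hγC]
      refine Polynomial.isUnit_C.2 (isUnit_iff_ne_zero.2 ?_)
      intro hc0
      rw [hc0, Polynomial.C_0] at hγC
      exact hγ0 hγC
    have hdegγ' : 1 ≤ γ'.natDegree := by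
      have e1 : γ'.natDegree = (Polynomial.map φ γ').natDegree :=
        (Polynomial.natDegree_map_eq_of_injective hφinj γ').symm
      rw [e1, hmapγ', Polynomial.natDegree_mul hCφb hγ0, Polynomial.natDegree_C]
      omega
    have hγ''prim := Polynomial.isPrimitive_primPart γ'
    have hγ''deg : 1 ≤ γ'.primPart.natDegree := by
      rw [Polynomial.natDegree_primPart]; exact hdegγ'
    have hγ''0 : γ'.primPart ≠ 0 := Polynomial.primPart_ne_zero γ'
    have hγ''nu : ¬IsUnit γ'.primPart := by
      intro hu
      rw [Polynomial.isUnit_iff] at hu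
      obtain ⟨r, _, hrr⟩ := hu
      rw [← hrr, Polynomial.natDegree_C] at hγ''deg
      omega
    obtain ⟨π, hπirr, hπdvd⟩ := WfDvdMonoid.exists_irreducible_factor hγ''nu hγ''0
    have hπdeg : 1 ≤ π.natDegree := by
      by_contra hd
      push_neg at hd
      have h0 : π.natDegree = 0 := by omega
      have hπC := Polynomial.eq_C_of_natDegree_eq_zero h0
      have : IsUnit (π.coeff 0) := hγ''prim (π.coeff 0) (by rwa [← hπC])
      exact hπirr.not_isUnit (by rw [hπC]; exact Polynomial.isUnit_C.2 this)
    have hππrim : π.IsPrimitive := by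
      intro r hr
      obtain ⟨w, hw⟩ := hr
      rcases hπirr.isUnit_or_isUnit hw with hu | hu
      · exact Polynomial.isUnit_C.1 hu
      · exfalso
        rw [Polynomial.isUnit_iff] at hu
        obtain ⟨r', _, hrr'⟩ := hu
        rw [hw, ← hrr', ← Polynomial.C_mul] at hπdeg
        rw [Polynomial.natDegree_C] at hπdeg
        omega
    have hπKirr : Irreducible (Polynomial.map φ π) :=
      (Polynomial.IsPrimitive.irreducible_iff_irreducible_map_fraction_map hππrim).1 hπirr
    have hπγ : Polynomial.map φ π ∣ γ := by
      have h1 : Polynomial.map φ π ∣ Polynomial.map φ γ' :=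
        Polynomial.map_dvd _ (dvd_trans hπdvd (Polynomial.primPart_dvd γ'))
      rw [hmapγ'] at h1
      exact (IsUnit.dvd_mul_left hCφbu).1 h1
    have hπprime : Prime π := UniqueFactorizationMonoid.irreducible_iff_prime.1 hπirr
    have descend : ∀ (P : Polynomial (MvPolynomial (Fin n) ℝ)),
        Polynomial.map φ π ∣ Polynomial.map φ P → π ∣ P := by
      intro P hPK
      obtain ⟨ρK, hρK⟩ := hPK
      obtain ⟨e, he⟩ :=
        IsLocalization.integerNormalization_map_to_map
          (nonZeroDivisors (MvPolynomial (Fin n) ℝ)) ρK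
      have key : π * IsLocalization.integerNormalization
          (nonZeroDivisors (MvPolynomial (Fin n) ℝ)) ρK
          = Polynomial.C (e : MvPolynomial (Fin n) ℝ) * P := by
        apply Polynomial.map_injective φ hφinj
        rw [Polynomial.map_mul, he, Polynomial.map_mul, Polynomial.map_C]
        rw [Algebra.smul_def, hρK]
        rw [show (algebraMap (MvPolynomial (Fin n) ℝ) (Polynomial K)) (e : MvPolynomial (Fin n) ℝ)
          = Polynomial.C (φ e) from by rw [Polynomial.algebraMap_apply]]
        ring
      have hdvd2 : π ∣ Polynomial.C (e : MvPolynomial (Fin n) ℝ) * P := ⟨_, key.symm⟩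
      rcases hπprime.2.2 _ _ hdvd2 with hce | hP
      · exfalso
        have hCe0 : Polynomial.C (e : MvPolynomial (Fin n) ℝ) ≠ 0 := by
          simpa [Polynomial.C_eq_zero] using nonZeroDivisors.ne_zero e.2
        have := Polynomial.natDegree_le_of_dvd hce hCe0
        rw [Polynomial.natDegree_C] at this
        omega
      · exact hP
    have hπG : π ∣ Gh := descend _ (dvd_trans hπγ (EuclideanDomain.gcd_dvd_left _ _))
    have hπH : π ∣ Hh := descend _ (dvd_trans hπγ (EuclideanDomain.gcd_dvd_right _ _))
    exact hπirr.not_isUnit (zd_common_dvd_isUnit hg hh hcp hπG hπH)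
  obtain ⟨a, b, hab⟩ := hcoprime
  obtain ⟨ar, har⟩ :=
    IsLocalization.integerNormalization_map_to_map (nonZeroDivisors (MvPolynomial (Fin n) ℝ)) a
  obtain ⟨br, hbr⟩ :=
    IsLocalization.integerNormalization_map_to_map (nonZeroDivisors (MvPolynomial (Fin n) ℝ)) b
  refine ⟨Polynomial.C (br : MvPolynomial (Fin n) ℝ) *
      IsLocalization.integerNormalization (nonZeroDivisors (MvPolynomial (Fin n) ℝ)) a,
    Polynomial.C (ar : MvPolynomial (Fin n) ℝ) *
      IsLocalization.integerNormalization (nonZeroDivisors (MvPolynomial (Fin n) ℝ)) b,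
    (ar : MvPolynomial (Fin n) ℝ) * (br : MvPolynomial (Fin n) ℝ),
    mul_ne_zero (nonZeroDivisors.ne_zero ar.2) (nonZeroDivisors.ne_zero br.2), ?_⟩
  apply Polynomial.map_injective φ hφinj
  have hsm : ∀ (s : ↥(nonZeroDivisors (MvPolynomial (Fin n) ℝ))) (P : Polynomial K),
      (s : MvPolynomial (Fin n) ℝ) • P = Polynomial.C (φ s) * P := by
    intro s P
    rw [Algebra.smul_def]
    congr 1
  rw [Polynomial.map_add, Polynomial.map_mul, Polynomial.map_mul, Polynomial.map_mul,
    Polynomial.map_mul, har, hbr, Polynomial.map_C, Polynomial.map_C, Polynomial.map_C,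
    hsm, hsm]
  have expand : Polynomial.C (φ br) * (Polynomial.C (φ ar) * a) * GK
      + Polynomial.C (φ ar) * (Polynomial.C (φ br) * b) * HK
      = Polynomial.C (φ ar) * Polynomial.C (φ br) * (a * GK + b * HK) := by ring
  rw [expand, hab, mul_one, ← Polynomial.C_mul, ← map_mul]

lemma zd_exists_h {n m : ℕ} (p : MvPolynomial (Fin n) ℝ) (hp0 : p ≠ 0) (hpnu : ¬IsUnit p)
    (F : Fin m → MvPolynomial (Fin n) ℝ)
    (hcop : ∀ c : MvPolynomial (Fin n) ℝ, (∀ i, c ∣ F i) → c ∣ p → IsUnit c) :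
    ∃ h : MvPolynomial (Fin n) ℝ, h ≠ 0 ∧
      (∀ w : Fin n → ℝ, (∀ i, eval w (F i) = 0) → eval w h = 0) ∧
      (∀ d : MvPolynomial (Fin n) ℝ, d ∣ p → d ∣ h → IsUnit d) := by
  classical
  set facs := UniqueFactorizationMonoid.factors p with hfacs
  have hirr : ∀ π ∈ facs, Irreducible π := fun π hπ =>
    UniqueFactorizationMonoid.irreducible_of_factor π hπ
  -- the bad parameter set for each factor is finite
  have hbad : ∀ π ∈ facs, {t : ℝ | π ∣ ∑ i : Fin m, C (t ^ (i : ℕ)) * F i}.Finite := by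
    intro π hπ
    have hπirr := hirr π hπ
    have hπp : Prime π := UniqueFactorizationMonoid.irreducible_iff_prime.1 hπirr
    have hπ0 : π ≠ 0 := hπp.ne_zero
    set I : Ideal (MvPolynomial (Fin n) ℝ) := Ideal.span {π} with hI
    haveI hIprime : I.IsPrime := (Ideal.span_singleton_prime hπ0).2 hπp
    set ψ := Ideal.Quotient.mk I with hψ
    have hψzero : ∀ f : MvPolynomial (Fin n) ℝ, ψ f = 0 ↔ π ∣ f := by
      intro f
      rw [hψ, Ideal.Quotient.eq_zero_iff_mem, hI, Ideal.mem_span_singleton]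
    obtain ⟨i0, hi0⟩ : ∃ i0, ¬ π ∣ F i0 := by
      by_contra hcon
      push_neg at hcon
      exact hπirr.not_isUnit (hcop π hcon
        (UniqueFactorizationMonoid.dvd_of_mem_factors hπ))
    set P : Polynomial (MvPolynomial (Fin n) ℝ ⧸ I) :=
      ∑ i : Fin m, Polynomial.monomial (i : ℕ) (ψ (F i)) with hP
    have hPcoeff : P.coeff (i0 : ℕ) = ψ (F i0) := by
      rw [hP, Polynomial.finset_sum_coeff]
      rw [Finset.sum_eq_single i0]
      · simp
      · intro b _ hbne
        have : (b : ℕ) ≠ (i0 : ℕ) := fun hv => hbne (Fin.val_injective hv)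
        simp [Polynomial.coeff_monomial, this]
      · intro hnot; exact absurd (Finset.mem_univ i0) hnot
    have hP0 : P ≠ 0 := by
      intro h0
      rw [h0, Polynomial.coeff_zero] at hPcoeff
      exact hi0 ((hψzero (F i0)).1 hPcoeff.symm)
    have hsub : {t : ℝ | π ∣ ∑ i : Fin m, C (t ^ (i : ℕ)) * F i}
        ⊆ (fun t : ℝ => ψ (C t)) ⁻¹' {u | P.IsRoot u} := by
      intro t ht
      simp only [Set.mem_setOf_eq] at ht
      simp only [Set.mem_preimage, Set.mem_setOf_eq, Polynomial.IsRoot]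
      rw [hP, Polynomial.eval_finset_sum]
      have : ∀ i : Fin m, Polynomial.eval (ψ (C t)) (Polynomial.monomial (i : ℕ) (ψ (F i)))
          = ψ (C (t ^ (i : ℕ)) * F i) := by
        intro i
        rw [Polynomial.eval_monomial, map_mul, ← map_pow, ← MvPolynomial.C_pow, mul_comm]
      rw [Finset.sum_congr rfl (fun i _ => this i), ← map_sum]
      exact (hψzero _).2 ht
    have hinj : Set.InjOn (fun t : ℝ => ψ (C t))
        ((fun t : ℝ => ψ (C t)) ⁻¹' {u | P.IsRoot u}) := by
      intro t1 _ t2 _ he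
      have he' : ψ (C t1) = ψ (C t2) := he
      by_contra hne
      have : ψ (C (t1 - t2)) = 0 := by
        rw [MvPolynomial.C_sub, map_sub, he', sub_self]
      have hdvd := (hψzero _).1 this
      have hCu : IsUnit (C (t1 - t2) : MvPolynomial (Fin n) ℝ) :=
        (isUnit_iff_ne_zero.2 (sub_ne_zero.2 hne)).map (C : ℝ →+* MvPolynomial (Fin n) ℝ)
      exact hπirr.not_isUnit (isUnit_of_dvd_unit hdvd hCu)
    exact (Set.Finite.preimage hinj (Polynomial.finite_setOf_isRoot hP0)).subset hsub
  -- choose a good parameter t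
  have hbig : (⋃ π ∈ facs.toFinset, {t : ℝ | π ∣ ∑ i : Fin m, C (t ^ (i : ℕ)) * F i}).Finite := by
    apply Set.Finite.biUnion (facs.toFinset.finite_toSet)
    intro π hπ
    exact hbad π (Multiset.mem_toFinset.1 hπ)
  obtain ⟨t, ht⟩ := hbig.infinite_compl.nonempty
  have htgood : ∀ π ∈ facs, ¬ π ∣ ∑ i : Fin m, C (t ^ (i : ℕ)) * F i := by
    intro π hπ hdvd
    exact ht (Set.mem_biUnion (Multiset.mem_toFinset.2 hπ) hdvd)
  refine ⟨∑ i : Fin m, C (t ^ (i : ℕ)) * F i, ?_, ?_, ?_⟩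
  · -- nonzero
    obtain ⟨π0, hπ0irr, hπ0dvd⟩ := WfDvdMonoid.exists_irreducible_factor hpnu hp0
    obtain ⟨q0, hq0mem, _⟩ :=
      UniqueFactorizationMonoid.exists_mem_factors_of_dvd hp0 hπ0irr hπ0dvd
    intro h0
    exact htgood q0 hq0mem (h0 ▸ dvd_zero q0)
  · intro w hw
    rw [map_sum]
    apply Finset.sum_eq_zero
    intro i _
    rw [map_mul, hw i, mul_zero]
  · intro d hdp hdh
    by_contra hdnu
    have hd0 : d ≠ 0 := by
      intro h0; rw [h0] at hdp; exact hp0 (zero_dvd_iff.1 hdp)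
    obtain ⟨π', hπ'irr, hπ'dvd⟩ := WfDvdMonoid.exists_irreducible_factor hdnu hd0
    obtain ⟨q', hq'mem, hq'assoc⟩ :=
      UniqueFactorizationMonoid.exists_mem_factors_of_dvd hp0 hπ'irr (hπ'dvd.trans hdp)
    exact htgood q' hq'mem (hq'assoc.dvd_iff_dvd_left.1 (hπ'dvd.trans hdh))

/-- `𝒞_p(x₀)`: the closure of the connected component of `{x : p(x) > 0}` containing `x₀`. -/
noncomputable def algInt {n : ℕ} (p : MvPolynomial (Fin n) ℝ) (x0 : Fin n → ℝ) :
    Set (Fin n → ℝ) :=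
  closure (connectedComponentIn {x : Fin n → ℝ | 0 < eval x p} x0)

lemma zd_frontier_zero {n : ℕ} (p : MvPolynomial (Fin n) ℝ) (x0 : Fin n → ℝ) :
    ∀ a ∈ frontier (algInt p x0), eval a p = 0 := by
  intro a ha
  have hU : IsOpen {x : Fin n → ℝ | 0 < eval x p} :=
    isOpen_lt continuous_const (zd_continuous_eval p)
  by_contra hne
  rcases lt_or_gt_of_ne hne with hlt | hgt
  · have hV : IsOpen {x : Fin n → ℝ | eval x p < 0} :=
      isOpen_lt (zd_continuous_eval p) continuous_const
    have haC : a ∈ closure (connectedComponentIn {x : Fin n → ℝ | 0 < eval x p} x0) := by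
      have := ha.1
      rwa [algInt, closure_closure] at this
    rcases mem_closure_iff.1 haC _ hV hlt with ⟨w, hw1, hw2⟩
    have hw3 := connectedComponentIn_subset _ _ hw2
    simp only [Set.mem_setOf_eq] at hw1 hw3
    linarith
  · have haU : a ∈ {x : Fin n → ℝ | 0 < eval x p} := hgt
    have hCopen : IsOpen (connectedComponentIn {x : Fin n → ℝ | 0 < eval x p} a) :=
      hU.connectedComponentIn
    have haC : a ∈ connectedComponentIn {x : Fin n → ℝ | 0 < eval x p} a :=
      mem_connectedComponentIn haU
    have haclo : a ∈ closure (connectedComponentIn {x : Fin n → ℝ | 0 < eval x p} x0) := by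
      have := ha.1
      rwa [algInt, closure_closure] at this
    rcases mem_closure_iff.1 haclo _ hCopen haC with ⟨w, hw1, hw2⟩
    have hcomp : connectedComponentIn {x : Fin n → ℝ | 0 < eval x p} a
        = connectedComponentIn {x : Fin n → ℝ | 0 < eval x p} x0 :=
      (connectedComponentIn_eq hw1).trans (connectedComponentIn_eq hw2).symm
    have hmem : a ∈ interior (algInt p x0) :=
      interior_maximal subset_closure (hcomp ▸ hCopen) (hcomp ▸ haC)
    exact ha.2 hmem

lemma zd_bad_null {n : ℕ} {x : Fin n → ℝ} {g h : MvPolynomial (Fin n) ℝ}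
    (hg : eval x g ≠ 0) (hh : eval x h ≠ 0)
    (hcp : ∀ d : MvPolynomial (Fin n) ℝ, d ∣ g → d ∣ h → IsUnit d) :
    ∃ D : MvPolynomial (Fin n) ℝ, D ≠ 0 ∧
      ∀ z : Fin n → ℝ,
        (∃ s : ℝ, eval (x + s • (z - x)) g = 0 ∧ eval (x + s • (z - x)) h = 0) →
        eval (z - x) D = 0 := by
  obtain ⟨A, B, d, hd0, hid⟩ := zd_bezout hg hh hcp
  refine ⟨d, hd0, ?_⟩
  rintro z ⟨s, hzg, hzh⟩
  have hev := congrArg (Polynomial.eval₂ (MvPolynomial.eval (z - x)) s) hid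
  rw [Polynomial.eval₂_add, Polynomial.eval₂_mul, Polynomial.eval₂_mul,
    Polynomial.eval₂_C] at hev
  rw [zdTheta_eval, zdTheta_eval, hzg, hzh, mul_zero, mul_zero, add_zero] at hev
  exact hev.symm

/-- Let `S` be an algebraic interior with defining polynomial `p` (a polynomial
of minimal degree realizing `S`), and `F₁, …, Fₘ` polynomials whose greatest common divisor is
coprime to `p` (i.e. any common divisor of all the `Fᵢ` dividing `p` is a unit).  Then
`∂S \ {a ∈ ∂S : F₁(a) = ⋯ = Fₘ(a) = 0}` is Zariski-dense in `∂S`: every polynomial vanishing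
on it vanishes on all of `∂S`. -/
theorem boundary_minus_common_zeros_zariski_dense (n m : ℕ) (S : Set (Fin n → ℝ))
    (p : MvPolynomial (Fin n) ℝ) (x0 : Fin n → ℝ)
    (hx0 : 0 < eval x0 p) (hS : S = algInt p x0)
    (hmin : ∀ (q : MvPolynomial (Fin n) ℝ) (x0' : Fin n → ℝ), 0 < eval x0' q →
      S = algInt q x0' → p.totalDegree ≤ q.totalDegree)
    (F : Fin m → MvPolynomial (Fin n) ℝ)
    (hcop : ∀ c : MvPolynomial (Fin n) ℝ, (∀ i, c ∣ F i) → c ∣ p → IsUnit c)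
    (q : MvPolynomial (Fin n) ℝ)
    (hq : ∀ a ∈ frontier S \ {a | ∀ i, eval a (F i) = 0}, eval a q = 0) :
    ∀ a ∈ frontier S, eval a q = 0 := by
  classical
  intro a ha
  by_contra hqa
  have hUopen : IsOpen {x : Fin n → ℝ | 0 < eval x p} :=
    isOpen_lt continuous_const (zd_continuous_eval p)
  have hCopen : IsOpen (connectedComponentIn {x : Fin n → ℝ | 0 < eval x p} x0) :=
    hUopen.connectedComponentIn
  have hSclosed : IsClosed S := by rw [hS]; exact isClosed_closure
  have hCsub : connectedComponentIn {x : Fin n → ℝ | 0 < eval x p} x0 ⊆ S := by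
    rw [hS]; exact subset_closure
  have hCint : connectedComponentIn {x : Fin n → ℝ | 0 < eval x p} x0 ⊆ interior S :=
    interior_maximal hCsub hCopen
  have hp0 : p ≠ 0 := by
    intro h0; rw [h0, map_zero] at hx0; exact lt_irrefl 0 hx0
  -- p is not a unit (otherwise the frontier is empty)
  have hpnu : ¬IsUnit p := by
    intro hu
    obtain ⟨r, hr0, hrC⟩ := zd_isUnit_constant p hu
    have hrpos : 0 < r := by rw [hrC] at hx0; simpa using hx0
    have hUuniv : {x : Fin n → ℝ | 0 < eval x p} = Set.univ := by
      ext w; simp [hrC, hrpos]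
    have hfr : frontier S = ∅ := by
      rw [hS]
      unfold algInt
      rw [hUuniv, connectedComponentIn_univ, PreconnectedSpace.connectedComponent_eq_univ,
        closure_univ, frontier_univ]
    rw [hfr] at ha
    exact ha
  have hfrp : ∀ b ∈ frontier S, eval b p = 0 := by
    rw [hS]; exact zd_frontier_zero p x0
  -- a small ball on which q does not vanish
  have hqopen : IsOpen {w : Fin n → ℝ | eval w q ≠ 0} :=
    (isClosed_eq (zd_continuous_eval q) continuous_const).isOpen_compl
  obtain ⟨r, hrpos, hball⟩ := Metric.isOpen_iff.1 hqopen a hqa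
  have hfrZF : ∀ b ∈ frontier S, b ∈ Metric.ball a r → (∀ i, eval b (F i) = 0) := by
    intro b hb hbball
    by_contra hbf
    exact (hball hbball) (hq b ⟨hb, hbf⟩)
  -- the auxiliary polynomial h
  obtain ⟨h, hh0, hhvan, hhcp⟩ := zd_exists_h p hp0 hpnu F hcop
  have hZnull : MeasureTheory.volume
      ({w : Fin n → ℝ | eval w p = 0} ∪ {w : Fin n → ℝ | eval w h = 0}) = 0 :=
    MeasureTheory.measure_union_null (zd_zero_null p hp0) (zd_zero_null h hh0)
  -- choose x in the ball, inside the interior, avoiding the zero sets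
  have haclo : a ∈ closure (interior S) := by
    have h1 : a ∈ S := by
      have h2 : a ∈ closure S := ha.1
      rwa [hSclosed.closure_eq] at h2
    have h2 : S ⊆ closure (interior S) := by
      calc S = closure (connectedComponentIn {x : Fin n → ℝ | 0 < eval x p} x0) := by
              rw [hS, algInt]
        _ ⊆ closure (interior S) := closure_mono hCint
    exact h2 h1
  obtain ⟨x, hx⟩ : ∃ x, x ∈ (Metric.ball a r ∩ interior S) \
      ({w : Fin n → ℝ | eval w p = 0} ∪ {w : Fin n → ℝ | eval w h = 0}) := by
    have hopen : IsOpen (Metric.ball a r ∩ interior S) :=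
      Metric.isOpen_ball.inter isOpen_interior
    have hne : (Metric.ball a r ∩ interior S).Nonempty := by
      rcases mem_closure_iff.1 haclo _ Metric.isOpen_ball (Metric.mem_ball_self hrpos)
        with ⟨w, hw1, hw2⟩
      exact ⟨w, hw1, hw2⟩
    have hpos := hopen.measure_pos MeasureTheory.volume hne
    by_contra hcon
    push_neg at hcon
    have hsub : Metric.ball a r ∩ interior S
        ⊆ {w : Fin n → ℝ | eval w p = 0} ∪ {w : Fin n → ℝ | eval w h = 0} := by
      intro w hw
      by_contra hwn
      exact hcon w ⟨hw, hwn⟩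
    have hle2 : (MeasureTheory.volume : MeasureTheory.Measure (Fin n → ℝ)) _ ≤
        (MeasureTheory.volume : MeasureTheory.Measure (Fin n → ℝ)) _ :=
      MeasureTheory.measure_mono hsub
    rw [hZnull] at hle2
    exact hpos.ne' (le_antisymm hle2 zero_le)
  -- choose y in the ball, outside S, avoiding the zero sets
  have haSc : a ∈ closure Sᶜ := by
    rw [closure_compl]
    exact ha.2
  obtain ⟨y, hy⟩ : ∃ y, y ∈ (Metric.ball a r ∩ Sᶜ) \
      ({w : Fin n → ℝ | eval w p = 0} ∪ {w : Fin n → ℝ | eval w h = 0}) := by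
    have hopen : IsOpen (Metric.ball a r ∩ Sᶜ) :=
      Metric.isOpen_ball.inter hSclosed.isOpen_compl
    have hne : (Metric.ball a r ∩ Sᶜ).Nonempty := by
      rcases mem_closure_iff.1 haSc _ Metric.isOpen_ball (Metric.mem_ball_self hrpos)
        with ⟨w, hw1, hw2⟩
      exact ⟨w, hw1, hw2⟩
    have hpos := hopen.measure_pos MeasureTheory.volume hne
    by_contra hcon
    push_neg at hcon
    have hsub : Metric.ball a r ∩ Sᶜ
        ⊆ {w : Fin n → ℝ | eval w p = 0} ∪ {w : Fin n → ℝ | eval w h = 0} := by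
      intro w hw
      by_contra hwn
      exact hcon w ⟨hw, hwn⟩
    have hle2 : (MeasureTheory.volume : MeasureTheory.Measure (Fin n → ℝ)) _ ≤
        (MeasureTheory.volume : MeasureTheory.Measure (Fin n → ℝ)) _ :=
      MeasureTheory.measure_mono hsub
    rw [hZnull] at hle2
    exact hpos.ne' (le_antisymm hle2 zero_le)
  have hxp : eval x p ≠ 0 := fun h0 => hx.2 (Or.inl h0)
  have hxh : eval x h ≠ 0 := fun h0 => hx.2 (Or.inr h0)
  have hyp : eval y p ≠ 0 := fun h0 => hy.2 (Or.inl h0)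
  have hyh : eval y h ≠ 0 := fun h0 => hy.2 (Or.inr h0)
  obtain ⟨Dx, hDx0, hDx⟩ := zd_bad_null hxp hxh hhcp
  obtain ⟨Dy, hDy0, hDy⟩ := zd_bad_null hyp hyh hhcp
  -- choose the midpoint z
  obtain ⟨z, hz⟩ : ∃ z, z ∈ Metric.ball a r \
      ({z : Fin n → ℝ | eval (z - x) Dx = 0} ∪ {z : Fin n → ℝ | eval (z - y) Dy = 0}) := by
    have hnull : ∀ (D : MvPolynomial (Fin n) ℝ) (v : Fin n → ℝ), D ≠ 0 →
        MeasureTheory.volume {z : Fin n → ℝ | eval (z - v) D = 0} = 0 := by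
      intro D v hD0
      have hset : {z : Fin n → ℝ | eval (z - v) D = 0}
          = (fun z : Fin n → ℝ => z + (-v)) ⁻¹' {w : Fin n → ℝ | eval w D = 0} := by
        ext z; simp [sub_eq_add_neg]
      rw [hset, MeasureTheory.measure_preimage_add_right]
      exact zd_zero_null D hD0
    have hpos := Metric.measure_ball_pos MeasureTheory.volume a hrpos
    by_contra hcon
    push_neg at hcon
    have hsub : Metric.ball a r ⊆
        {z : Fin n → ℝ | eval (z - x) Dx = 0} ∪ {z : Fin n → ℝ | eval (z - y) Dy = 0} := by
      intro w hw
      by_contra hwn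
      exact hcon w ⟨hw, hwn⟩
    have hle : (MeasureTheory.volume : MeasureTheory.Measure (Fin n → ℝ)) _ ≤
        (MeasureTheory.volume : MeasureTheory.Measure (Fin n → ℝ)) _ :=
      MeasureTheory.measure_mono hsub
    rw [MeasureTheory.measure_union_null (hnull Dx x hDx0) (hnull Dy y hDy0)] at hle
    exact hpos.ne' (le_antisymm hle zero_le)
  -- the path from x to y through z
  set P : Set (Fin n → ℝ) := segment ℝ x z ∪ segment ℝ y z with hP
  have hPcon : IsPreconnected P :=
    IsPreconnected.union z (right_mem_segment ℝ x z) (right_mem_segment ℝ y z)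
      (convex_segment x z).isPreconnected (convex_segment y z).isPreconnected
  have hPball : P ⊆ Metric.ball a r := by
    intro w hw
    rcases hw with hw | hw
    · exact (convex_ball a r).segment_subset hx.1.1 hz.1 hw
    · exact (convex_ball a r).segment_subset hy.1.1 hz.1 hw
  have hPW : ∀ w ∈ P, ¬ (eval w p = 0 ∧ eval w h = 0) := by
    rintro w hw ⟨hwp, hwh⟩
    rcases hw with hw | hw
    · rw [segment_eq_image'] at hw
      obtain ⟨s, _, rfl⟩ := hw
      exact hz.2 (Or.inl (hDx z ⟨s, hwp, hwh⟩))
    · rw [segment_eq_image'] at hw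
      obtain ⟨s, _, rfl⟩ := hw
      exact hz.2 (Or.inr (hDy z ⟨s, hwp, hwh⟩))
  have hPx : x ∈ P := Or.inl (left_mem_segment ℝ x z)
  have hPy : y ∈ P := Or.inr (left_mem_segment ℝ y z)
  -- the path must meet the frontier
  obtain ⟨w, hwP, hwfr⟩ : ∃ w ∈ P, w ∈ frontier S := by
    by_contra hcon
    push_neg at hcon
    have hPsub : P ⊆ interior S ∪ Sᶜ := by
      intro w hw
      rcases Classical.em (w ∈ S) with hwS | hwS
      · left
        by_contra hwi
        exact hcon w hw ⟨subset_closure hwS, hwi⟩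
      · right; exact hwS
    have hdisj : Disjoint (interior S) Sᶜ := by
      rw [Set.disjoint_left]
      intro b hb hbc
      exact hbc (interior_subset hb)
    rcases hPcon.subset_or_subset isOpen_interior hSclosed.isOpen_compl hdisj hPsub
      with hsu | hsv
    · exact hy.1.2 (interior_subset (hsu hPy))
    · exact (hsv hPx) (interior_subset hx.1.2)
  have hwball : w ∈ Metric.ball a r := hPball hwP
  have hwp : eval w p = 0 := hfrp w hwfr
  have hwF : ∀ i, eval w (F i) = 0 := hfrZF w hwfr hwball
  have hwh : eval w h = 0 := hhvan w hwF
  exact hPW w hwP ⟨hwp, hwh⟩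
end

section
/- Let p ∈ ℝ[x₁,…,xₙ] be a polynomial that is real zero with respect to a point u (i.e., p(u) > 0 and for every nonzero w the univariate polynomial t ↦ p(u + tw) has only real roots). Then the algebraic interior S = 𝒞_p(u) is convex, and p is real zero with respect to every point of the interior of S. -/
open MvPolynomial

/-- The univariate polynomial `t ↦ p(u + t w)`. -/
noncomputable def lineRestrict {n : ℕ} (p : MvPolynomial (Fin n) ℝ) (u w : Fin n → ℝ) :
    Polynomial ℝ :=
  MvPolynomial.aeval (fun i => Polynomial.C (u i) + Polynomial.X * Polynomial.C (w i)) p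

/-- A univariate real polynomial has only real roots: every complex root is real. -/
def OnlyRealRoots (q : Polynomial ℝ) : Prop :=
  ∀ z : ℂ, Polynomial.aeval z q = 0 → z.im = 0

/-- `p` is real zero with respect to `u`: `p(u) > 0` and for every nonzero `w` the univariate
polynomial `t ↦ p(u + tw)` has only real roots. -/
def IsRealZeroAt {n : ℕ} (p : MvPolynomial (Fin n) ℝ) (u : Fin n → ℝ) : Prop :=
  0 < eval u p ∧ ∀ w : Fin n → ℝ, w ≠ 0 → OnlyRealRoots (lineRestrict p u w)

open Polynomial Finset Filter Topology

namespace RZaux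

variable {n : ℕ}

/-- Embedding of real pairs into complex pairs. -/
def emb (v : ℝ × (Fin n → ℝ)) : ℂ × (Fin n → ℂ) := ((v.1 : ℂ), fun i => (v.2 i : ℂ))

/-- Evaluation of the homogenization (at degree `totalDegree p`) of `p` at a complex point. -/
noncomputable def Pev (p : MvPolynomial (Fin n) ℝ) (v : ℂ × (Fin n → ℂ)) : ℂ :=
  ∑ m ∈ p.support, ((p.coeff m : ℝ) : ℂ) * v.1 ^ (p.totalDegree - ∑ i, m i) * ∏ i, v.2 i ^ m i

/-- The restriction of the homogenization to the line `a + t b`, as a univariate polynomial. -/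
noncomputable def Pline (p : MvPolynomial (Fin n) ℝ) (a b : ℂ × (Fin n → ℂ)) : Polynomial ℂ :=
  ∑ m ∈ p.support, Polynomial.C ((p.coeff m : ℝ) : ℂ) *
    (Polynomial.C a.1 + Polynomial.X * Polynomial.C b.1) ^ (p.totalDegree - ∑ i, m i) *
    ∏ i, (Polynomial.C (a.2 i) + Polynomial.X * Polynomial.C (b.2 i)) ^ m i

lemma eval_Pline (p : MvPolynomial (Fin n) ℝ) (a b : ℂ × (Fin n → ℂ)) (t : ℂ) :
    (Pline p a b).eval t = Pev p (a + t • b) := by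
  simp only [Pline, Pev, Polynomial.eval_finset_sum, Polynomial.eval_mul, Polynomial.eval_add, Polynomial.eval_pow, Polynomial.eval_prod, Polynomial.eval_C, Polynomial.eval_X,
    Prod.smul_def, Prod.fst_add, Prod.snd_add, Pi.add_apply, Pi.smul_apply, smul_eq_mul]

lemma sum_le_totalDegree {p : MvPolynomial (Fin n) ℝ} {m : Fin n →₀ ℕ} (hm : m ∈ p.support) :
    ∑ i, m i ≤ p.totalDegree := by
  have := MvPolynomial.le_totalDegree hm
  rwa [Finsupp.sum_fintype _ _ (fun _ => rfl)] at this

lemma Pev_smul (p : MvPolynomial (Fin n) ℝ) (z : ℂ) (v : ℂ × (Fin n → ℂ)) :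
    Pev p (z • v) = z ^ p.totalDegree * Pev p v := by
  rw [Pev, Pev, Finset.mul_sum]
  refine Finset.sum_congr rfl fun m hm => ?_
  have hw : ∑ i, m i ≤ p.totalDegree := sum_le_totalDegree hm
  have h1 : ∏ i, ((z • v).2 i) ^ m i = z ^ (∑ i, m i) * ∏ i, v.2 i ^ m i := by
    simp only [Prod.smul_def, Pi.smul_apply, smul_eq_mul, mul_pow]
    rw [Finset.prod_mul_distrib, Finset.prod_pow_eq_pow_sum]
  have h2 : ((z • v).1) ^ (p.totalDegree - ∑ i, m i) =
      z ^ (p.totalDegree - ∑ i, m i) * v.1 ^ (p.totalDegree - ∑ i, m i) := by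
    simp [Prod.smul_def, mul_pow]
  rw [h1, h2]
  have h3 : z ^ (p.totalDegree - ∑ i, m i) * z ^ (∑ i, m i) = z ^ p.totalDegree := by
    rw [← pow_add, Nat.sub_add_cancel hw]
  calc ((p.coeff m : ℝ) : ℂ) * (z ^ (p.totalDegree - ∑ i, m i) * v.1 ^ (p.totalDegree - ∑ i, m i)) *
        (z ^ (∑ i, m i) * ∏ i, v.2 i ^ m i)
      = (z ^ (p.totalDegree - ∑ i, m i) * z ^ (∑ i, m i)) *
        (((p.coeff m : ℝ) : ℂ) * v.1 ^ (p.totalDegree - ∑ i, m i) * ∏ i, v.2 i ^ m i) := by ring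
    _ = z ^ p.totalDegree * (((p.coeff m : ℝ) : ℂ) * v.1 ^ (p.totalDegree - ∑ i, m i) * ∏ i, v.2 i ^ m i) := by
        rw [h3]

lemma Pev_chart (p : MvPolynomial (Fin n) ℝ) (x : Fin n → ℂ) :
    Pev p (1, x) = MvPolynomial.aeval x p := by
  rw [MvPolynomial.aeval_def, MvPolynomial.eval₂_eq, Pev]
  refine Finset.sum_congr rfl fun m hm => ?_
  simp only [one_pow, one_mul]
  rw [← Finset.prod_subset (Finset.subset_univ m.support)
    (fun i _ hi => by simp [Finsupp.notMem_support_iff.mp hi])]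
  simp [MvPolynomial.algebraMap_eq]

lemma Pev_conj (p : MvPolynomial (Fin n) ℝ) (v : ℂ × (Fin n → ℂ)) :
    Pev p ((starRingEnd ℂ) v.1, fun i => (starRingEnd ℂ) (v.2 i)) = (starRingEnd ℂ) (Pev p v) := by
  simp [Pev, map_sum, map_mul, map_pow, map_prod]

lemma coeff_prod_top {ι : Type*} (s : Finset ι) (f : ι → Polynomial ℂ) (k : ι → ℕ)
    (h : ∀ i ∈ s, (f i).natDegree ≤ k i) :
    (∏ i ∈ s, f i).coeff (∑ i ∈ s, k i) = ∏ i ∈ s, (f i).coeff (k i) := by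
  induction s using Finset.cons_induction with
  | empty => simp
  | cons a s ha ih =>
    rw [Finset.prod_cons, Finset.sum_cons, coeff_mul_add_eq_of_natDegree_le (h a (Finset.mem_cons_self a s))
      ((natDegree_prod_le _ _).trans (Finset.sum_le_sum fun i hi => h i (Finset.mem_cons_of_mem hi))),
      ih (fun i hi => h i (Finset.mem_cons_of_mem hi)), Finset.prod_cons]

lemma natDegree_linear_le (a b : ℂ) :
    (Polynomial.C a + Polynomial.X * Polynomial.C b).natDegree ≤ 1 := by
  refine (natDegree_add_le _ _).trans (max_le (by simp) ?_)
  refine (natDegree_mul_le).trans ?_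
  simp

lemma natDegree_linpow_le (a b : ℂ) (k : ℕ) :
    ((Polynomial.C a + Polynomial.X * Polynomial.C b) ^ k).natDegree ≤ k := by
  refine (natDegree_pow_le).trans ?_
  calc k * (Polynomial.C a + Polynomial.X * Polynomial.C b).natDegree ≤ k * 1 :=
        Nat.mul_le_mul_left _ (natDegree_linear_le a b)
    _ = k := mul_one _

lemma coeff_linear_one (a b : ℂ) : (Polynomial.C a + Polynomial.X * Polynomial.C b).coeff 1 = b := by
  simp [Polynomial.coeff_C]

lemma coeff_linpow (a b : ℂ) (k : ℕ) :
    ((Polynomial.C a + Polynomial.X * Polynomial.C b) ^ k).coeff k = b ^ k := by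
  have := coeff_pow_of_natDegree_le (p := Polynomial.C a + Polynomial.X * Polynomial.C b)
    (n := 1) (m := k) (natDegree_linear_le a b)
  rw [mul_one] at this
  rw [this, coeff_linear_one]

lemma natDegree_Pline_le (p : MvPolynomial (Fin n) ℝ) (a b : ℂ × (Fin n → ℂ)) :
    (Pline p a b).natDegree ≤ p.totalDegree := by
  refine natDegree_sum_le_of_forall_le _ _ fun m hm => ?_
  have hw : ∑ i, m i ≤ p.totalDegree := sum_le_totalDegree hm
  refine (natDegree_mul_le).trans ?_
  have h2 : (∏ i, (Polynomial.C (a.2 i) + Polynomial.X * Polynomial.C (b.2 i)) ^ m i).natDegree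
      ≤ ∑ i, m i :=
    (natDegree_prod_le _ _).trans (Finset.sum_le_sum fun i _ => natDegree_linpow_le _ _ _)
  have h3 : (Polynomial.C (((p.coeff m : ℝ) : ℂ)) *
      (Polynomial.C a.1 + Polynomial.X * Polynomial.C b.1) ^ (p.totalDegree - ∑ i, m i)).natDegree
      ≤ p.totalDegree - ∑ i, m i :=
    (natDegree_mul_le).trans (by simpa using natDegree_linpow_le a.1 b.1 _)
  omega

lemma coeff_Pline_top (p : MvPolynomial (Fin n) ℝ) (a b : ℂ × (Fin n → ℂ)) :
    (Pline p a b).coeff p.totalDegree = Pev p b := by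
  rw [Pline, finset_sum_coeff, Pev]
  refine Finset.sum_congr rfl fun m hm => ?_
  have hw : ∑ i, m i ≤ p.totalDegree := sum_le_totalDegree hm
  have hd0 : (Polynomial.C (((p.coeff m : ℝ) : ℂ)) *
      (Polynomial.C a.1 + Polynomial.X * Polynomial.C b.1) ^ (p.totalDegree - ∑ i, m i)).natDegree
      ≤ p.totalDegree - ∑ i, m i :=
    (natDegree_mul_le).trans (by simpa using natDegree_linpow_le a.1 b.1 _)
  have hd2 : (∏ i, (Polynomial.C (a.2 i) + Polynomial.X * Polynomial.C (b.2 i)) ^ m i).natDegree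
      ≤ ∑ i, m i :=
    (natDegree_prod_le _ _).trans (Finset.sum_le_sum fun i _ => natDegree_linpow_le _ _ _)
  have key := coeff_mul_add_eq_of_natDegree_le hd0 hd2
  rw [Nat.sub_add_cancel hw] at key
  rw [key, Polynomial.coeff_C_mul, coeff_linpow,
    coeff_prod_top _ _ _ (fun i _ => natDegree_linpow_le (a.2 i) (b.2 i) (m i))]
  congr 1
  exact Finset.prod_congr rfl fun i _ => coeff_linpow _ _ _


/-- Bound for roots of a polynomial in terms of coefficient bounds. -/
lemma root_bound {k : ℕ} {f : Polynomial ℂ} (hd : f.natDegree ≤ k) {z : ℂ} (hz : f.eval z = 0)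
    {B : ℝ} (hB : ∀ j, j < k → ‖f.coeff j‖ ≤ B) (hlc : f.coeff k ≠ 0) :
    ‖z‖ ≤ max 1 (k * B / ‖f.coeff k‖) := by
  rcases le_or_gt ‖z‖ 1 with h1 | h1
  · exact le_max_of_le_left h1
  rcases Nat.eq_zero_or_pos k with rfl | hk
  · exfalso
    have hf : f = Polynomial.C (f.coeff 0) := Polynomial.eq_C_of_natDegree_le_zero hd
    rw [hf] at hz
    simp at hz
    exact hlc (by simpa using hz)
  have heval : f.eval z = ∑ j ∈ Finset.range (k + 1), f.coeff j * z ^ j :=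
    Polynomial.eval_eq_sum_range' (Nat.lt_succ_of_le hd) z
  rw [Finset.sum_range_succ] at heval
  have hkey : f.coeff k * z ^ k = -∑ j ∈ Finset.range k, f.coeff j * z ^ j := by
    rw [hz] at heval
    have : f.coeff k * z ^ k = -(∑ x ∈ Finset.range k, f.coeff x * z ^ x) := by
      linear_combination -heval
    simpa using this
  have hnorm : ‖f.coeff k‖ * ‖z‖ ^ k ≤ k * B * ‖z‖ ^ (k - 1) := by
    calc ‖f.coeff k‖ * ‖z‖ ^ k = ‖f.coeff k * z ^ k‖ := by rw [norm_mul, norm_pow]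
      _ = ‖∑ j ∈ Finset.range k, f.coeff j * z ^ j‖ := by rw [hkey, norm_neg]
      _ ≤ ∑ j ∈ Finset.range k, ‖f.coeff j * z ^ j‖ := norm_sum_le _ _
      _ ≤ ∑ j ∈ Finset.range k, B * ‖z‖ ^ (k - 1) := by
          refine Finset.sum_le_sum fun j hj => ?_
          rw [norm_mul, norm_pow]
          have hj' := Finset.mem_range.mp hj
          have h2 : ‖z‖ ^ j ≤ ‖z‖ ^ (k - 1) :=
            pow_le_pow_right₀ h1.le (by omega)
          exact mul_le_mul (hB j hj') h2 (by positivity) ((norm_nonneg _).trans (hB 0 hk))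
      _ = k * B * ‖z‖ ^ (k - 1) := by rw [Finset.sum_const, Finset.card_range, nsmul_eq_mul]; ring
  have hzpow : ‖z‖ ^ k = ‖z‖ ^ (k - 1) * ‖z‖ := by
    rw [← pow_succ]; congr 1; omega
  have hpos : (0:ℝ) < ‖z‖ ^ (k - 1) := by positivity
  have h3 : ‖f.coeff k‖ * ‖z‖ ≤ k * B := by
    have := hnorm
    rw [hzpow] at this
    nlinarith [this, hpos]
  have hlcpos : (0:ℝ) < ‖f.coeff k‖ := norm_pos_iff.mpr hlc
  refine le_max_of_le_right ?_
  rw [le_div_iff₀ hlcpos]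
  nlinarith [h3]

lemma tendsto_eval_of_coeff {k : ℕ} {g : ℕ → Polynomial ℂ} {G : Polynomial ℂ}
    (hdg : ∀ m, (g m).natDegree ≤ k) (hdG : G.natDegree ≤ k)
    (hconv : ∀ j, Tendsto (fun m => (g m).coeff j) atTop (𝓝 (G.coeff j)))
    {z : ℕ → ℂ} {z₀ : ℂ} (hz : Tendsto z atTop (𝓝 z₀)) :
    Tendsto (fun m => (g m).eval (z m)) atTop (𝓝 (G.eval z₀)) := by
  have hg : ∀ m, (g m).eval (z m) = ∑ j ∈ Finset.range (k + 1), (g m).coeff j * z m ^ j :=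
    fun m => Polynomial.eval_eq_sum_range' (Nat.lt_succ_of_le (hdg m)) _
  have hG : G.eval z₀ = ∑ j ∈ Finset.range (k + 1), G.coeff j * z₀ ^ j :=
    Polynomial.eval_eq_sum_range' (Nat.lt_succ_of_le hdG) _
  simp only [hg, hG]
  exact tendsto_finset_sum _ fun j _ => ((hconv j).mul (hz.pow j))

lemma exists_roots_fun {f : Polynomial ℂ} {k : ℕ} (hd : f.natDegree ≤ k) {L : ℂ} (hL : L ≠ 0)
    (hlc : f.coeff k = L) :
    ∃ r : Fin k → ℂ, (∀ i, f.eval (r i) = 0) ∧ ∀ z, f.eval z = L * ∏ i, (z - r i) := by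
  have hne : f ≠ 0 := fun h => hL (by simp [h] at hlc; exact hlc.symm)
  have hdeg : f.natDegree = k :=
    le_antisymm hd (Polynomial.le_natDegree_of_ne_zero (hlc ▸ hL))
  have hsplits : Polynomial.Splits f := IsAlgClosed.splits f
  have hcard : f.roots.card = k := by
    rw [Polynomial.splits_iff_card_roots.mp hsplits, hdeg]
  set lst := f.roots.toList with hlst
  have hlen : lst.length = k := by rw [hlst, Multiset.length_toList, hcard]
  refine ⟨fun i => lst.get (Fin.cast hlen.symm i), fun i => ?_, fun z => ?_⟩
  · have hmem : lst.get (Fin.cast hlen.symm i) ∈ f.roots := by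
      have : lst.get (Fin.cast hlen.symm i) ∈ lst := List.get_mem _ _
      exact Multiset.mem_toList.mp this
    exact ((Polynomial.mem_roots'.mp hmem).2 : _)
  · have heq := hsplits.eq_prod_roots
    have hlead : f.leadingCoeff = L := by rw [Polynomial.leadingCoeff, hdeg, hlc]
    calc f.eval z = (Polynomial.C f.leadingCoeff *
          (f.roots.map fun a => Polynomial.X - Polynomial.C a).prod).eval z := by rw [← heq]
      _ = L * ((f.roots.map fun a => Polynomial.X - Polynomial.C a).map (Polynomial.eval z)).prod := by
          rw [Polynomial.eval_mul, Polynomial.eval_C, hlead, Polynomial.eval_multiset_prod]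
      _ = L * (f.roots.map fun a => z - a).prod := by
          rw [Multiset.map_map]; simp
      _ = L * ∏ i, (z - lst.get (Fin.cast hlen.symm i)) := by
          congr 1
          rw [show f.roots = (lst : Multiset ℂ) by rw [hlst, Multiset.coe_toList]]
          rw [Multiset.map_coe, Multiset.prod_coe]
          conv_lhs => rw [← List.ofFn_get lst]
          rw [List.map_ofFn, List.prod_ofFn]
          exact (Fintype.prod_equiv (finCongr hlen.symm) _ _ fun i => rfl).symm

/-- Every root of the limit polynomial is a limit of roots (along a subsequence). -/
lemma cor_A {k : ℕ} {g : ℕ → Polynomial ℂ} {G : Polynomial ℂ} {L : ℂ} (hL : L ≠ 0)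
    (hdg : ∀ m, (g m).natDegree ≤ k) (hdG : G.natDegree ≤ k)
    (hlcg : ∀ m, (g m).coeff k = L) (_hlcG : G.coeff k = L)
    (hconv : ∀ j, Tendsto (fun m => (g m).coeff j) atTop (𝓝 (G.coeff j)))
    {z₀ : ℂ} (hz₀ : G.eval z₀ = 0) :
    ∃ (φ : ℕ → ℕ) (w : ℕ → ℂ), StrictMono φ ∧ (∀ m, (g (φ m)).eval (w m) = 0) ∧
      Tendsto w atTop (𝓝 z₀) := by
  -- coefficient bound
  have hBj : ∀ j, ∃ Bj : ℝ, ∀ m, ‖(g m).coeff j‖ ≤ Bj := by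
    intro j
    obtain ⟨b, hb⟩ := ((hconv j).norm).bddAbove_range
    exact ⟨b, fun m => hb ⟨m, rfl⟩⟩
  choose Bf hBf using hBj
  set B : ℝ := ∑ j ∈ Finset.range k, Bf j with hB
  have hBle : ∀ j, j < k → Bf j ≤ B :=
    fun j hj => Finset.single_le_sum (f := Bf)
      (fun i _ => (norm_nonneg _).trans (hBf i 0)) (Finset.mem_range.mpr hj)
  set M : ℝ := max 1 (k * B / ‖L‖) with hM
  -- root functions
  have hroots : ∀ m, ∃ r : Fin k → ℂ, (∀ i, (g m).eval (r i) = 0) ∧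
      ∀ z, (g m).eval z = L * ∏ i, (z - r i) :=
    fun m => exists_roots_fun (hdg m) hL (hlcg m)
  choose r hr1 hr2 using hroots
  have hbdd : ∀ m, r m ∈ Metric.closedBall (0 : Fin k → ℂ) M := by
    intro m
    rw [Metric.mem_closedBall, dist_zero_right]
    refine (pi_norm_le_iff_of_nonneg (le_max_of_le_left zero_le_one)).mpr fun i => ?_
    have := root_bound (hdg m) (hr1 m i) (B := B)
      (fun j hj => (hBf j m).trans (hBle j hj)) (by rw [hlcg m]; exact hL)
    rwa [hlcg m] at this
  obtain ⟨ρ, _, φ, hφ, hρ⟩ := (isCompact_closedBall (0 : Fin k → ℂ) M).tendsto_subseq hbdd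
  -- identify the limit
  have hφtop : Tendsto φ atTop atTop := hφ.tendsto_atTop
  have heval : ∀ z : ℂ, G.eval z = L * ∏ i, (z - ρ i) := by
    intro z
    have h1 : Tendsto (fun m => (g (φ m)).eval z) atTop (𝓝 (G.eval z)) :=
      (tendsto_eval_of_coeff hdg hdG hconv tendsto_const_nhds (z := fun _ => z)).comp hφtop
    have h2 : Tendsto (fun m => L * ∏ i, (z - r (φ m) i)) atTop (𝓝 (L * ∏ i, (z - ρ i))) := by
      refine Filter.Tendsto.const_mul L (tendsto_finset_prod _ fun i _ => ?_)
      exact tendsto_const_nhds.sub (((continuous_apply i).continuousAt.tendsto).comp hρ)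
    have h3 : (fun m => (g (φ m)).eval z) = fun m => L * ∏ i, (z - r (φ m) i) := by
      funext m; exact hr2 (φ m) z
    rw [h3] at h1
    exact tendsto_nhds_unique h1 h2
  have hzero : ∃ i, ρ i = z₀ := by
    have := heval z₀
    rw [hz₀] at this
    have := (mul_eq_zero.mp this.symm).resolve_left hL
    obtain ⟨i, _, hi⟩ := Finset.prod_eq_zero_iff.mp this
    exact ⟨i, by linear_combination -hi⟩
  obtain ⟨i, hi⟩ := hzero
  refine ⟨φ, fun m => r (φ m) i, hφ, fun m => hr1 (φ m) i, ?_⟩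
  have := (((continuous_apply i).continuousAt.tendsto).comp hρ)
  rwa [hi] at this

/-- Limits of roots are roots of the limit (along a subsequence picking a convergent one). -/
lemma cor_B {k : ℕ} {g : ℕ → Polynomial ℂ} {G : Polynomial ℂ} {L : ℂ} (hL : L ≠ 0)
    (hdg : ∀ m, (g m).natDegree ≤ k) (hdG : G.natDegree ≤ k)
    (hlcg : ∀ m, (g m).coeff k = L)
    (hconv : ∀ j, Tendsto (fun m => (g m).coeff j) atTop (𝓝 (G.coeff j)))
    {z : ℕ → ℂ} (hz : ∀ m, (g m).eval (z m) = 0) :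
    ∃ (φ : ℕ → ℕ) (z₀ : ℂ), StrictMono φ ∧ G.eval z₀ = 0 ∧ Tendsto (z ∘ φ) atTop (𝓝 z₀) := by
  have hBj : ∀ j, ∃ Bj : ℝ, ∀ m, ‖(g m).coeff j‖ ≤ Bj := by
    intro j
    obtain ⟨b, hb⟩ := ((hconv j).norm).bddAbove_range
    exact ⟨b, fun m => hb ⟨m, rfl⟩⟩
  choose Bf hBf using hBj
  set B : ℝ := ∑ j ∈ Finset.range k, Bf j with hB
  have hBle : ∀ j, j < k → Bf j ≤ B :=
    fun j hj => Finset.single_le_sum (f := Bf)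
      (fun i _ => (norm_nonneg _).trans (hBf i 0)) (Finset.mem_range.mpr hj)
  set M : ℝ := max 1 (k * B / ‖L‖) with hM
  have hbdd : ∀ m, z m ∈ Metric.closedBall (0 : ℂ) M := by
    intro m
    rw [Metric.mem_closedBall, dist_zero_right]
    have := root_bound (hdg m) (hz m) (B := B)
      (fun j hj => (hBf j m).trans (hBle j hj)) (by rw [hlcg m]; exact hL)
    rwa [hlcg m] at this
  obtain ⟨z₀, _, φ, hφ, hz₀⟩ := (isCompact_closedBall (0 : ℂ) M).tendsto_subseq hbdd
  refine ⟨φ, z₀, hφ, ?_, hz₀⟩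
  have h1 : Tendsto (fun m => (g (φ m)).eval (z (φ m))) atTop (𝓝 (G.eval z₀)) := by
    have := tendsto_eval_of_coeff (g := g ∘ φ) (G := G) (fun m => hdg (φ m)) hdG
      (fun j => (hconv j).comp hφ.tendsto_atTop) (z := z ∘ φ) hz₀
    exact this
  have h2 : (fun m => (g (φ m)).eval (z (φ m))) = fun _ => (0:ℂ) := funext fun m => hz (φ m)
  rw [h2] at h1
  exact (tendsto_nhds_unique tendsto_const_nhds h1).symm

end RZaux

namespace RZaux2
open RZaux

lemma key_clopen {Y : Type*} [MetricSpace Y] {A : Set Y} (hA : IsPreconnected A)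
    {k : ℕ} {F : Y → Polynomial ℂ} {L : ℂ} (hL : L ≠ 0)
    (hdeg : ∀ y ∈ A, (F y).natDegree ≤ k)
    (hlc : ∀ y ∈ A, (F y).coeff k = L)
    (hcoeff : ∀ j, ContinuousOn (fun y => (F y).coeff j) A)
    {O : Set ℂ} (hO : IsOpen O)
    (hfr : ∀ y ∈ A, ∀ z, (F y).eval z = 0 → z ∉ frontier O)
    {y₀ : Y} (hy₀ : y₀ ∈ A) (h₀ : ∀ z, (F y₀).eval z = 0 → z ∈ O)
    {y₁ : Y} (hy₁ : y₁ ∈ A) : ∀ z, (F y₁).eval z = 0 → z ∈ O := by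
  haveI : PreconnectedSpace A := Subtype.preconnectedSpace hA
  set S : Set A := {y | ∀ z, (F (y : Y)).eval z = 0 → z ∈ O} with hS
  have hconv : ∀ (y : A) (ys : ℕ → A), Filter.Tendsto ys Filter.atTop (nhds y) →
      ∀ j, Filter.Tendsto (fun m => (F (ys m : Y)).coeff j) Filter.atTop
        (nhds ((F (y : Y)).coeff j)) := by
    intro y ys hys j
    have : Continuous fun y : A => (F (y : Y)).coeff j := by
      have := (hcoeff j).restrict
      exact this
    exact ((this.continuousAt).tendsto).comp hys
  have hclosed : IsClosed S := by
    refine IsSeqClosed.isClosed ?_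
    intro ys y hmem hys z hz
    obtain ⟨φ, w, hφ, hw, hwz⟩ := cor_A hL (fun m => hdeg _ (ys m).2) (hdeg _ y.2)
      (fun m => hlc _ (ys m).2) (hlc _ y.2) (hconv y ys hys) hz
    have hwO : ∀ m, w m ∈ O := fun m => hmem (φ m) (w m) (hw m)
    have hcl : z ∈ closure O := mem_closure_of_tendsto hwz (Filter.Eventually.of_forall hwO)
    by_contra hzO
    have : z ∈ frontier O := by
      rw [frontier, hO.interior_eq]
      exact ⟨hcl, hzO⟩
    exact hfr _ y.2 z hz this
  have hcopen : IsClosed Sᶜ := by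
    refine IsSeqClosed.isClosed ?_
    intro ys y hmem hys
    have : ∀ m, ∃ z, (F (ys m : Y)).eval z = 0 ∧ z ∉ O := by
      intro m
      have := hmem m
      simp only [hS, Set.mem_compl_iff, Set.mem_setOf_eq] at this
      push_neg at this
      exact this
    choose z hz1 hz2 using this
    obtain ⟨φ, z₀, hφ, hz₀, hzz⟩ := cor_B hL (fun m => hdeg _ (ys m).2) (hdeg _ y.2)
      (fun m => hlc _ (ys m).2) (hconv y ys hys) hz1
    have hz₀O : z₀ ∉ O := by
      have : z₀ ∈ Oᶜ :=
        (hO.isClosed_compl.mem_of_tendsto hzz (Filter.Eventually.of_forall fun m => hz2 (φ m)))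
      exact this
    intro hyS
    exact hz₀O (hyS z₀ hz₀)
  have hclopen : IsClopen S := ⟨hclosed, by simpa using hcopen.isOpen_compl⟩
  have hne : S.Nonempty := ⟨⟨y₀, hy₀⟩, fun z hz => h₀ z hz⟩
  have := hclopen.eq_univ hne
  intro z hz
  have hy₁S : (⟨y₁, hy₁⟩ : A) ∈ S := by rw [this]; trivial
  exact hy₁S z hz

end RZaux2

namespace RZaux

section Nice
open Polynomial
variable {α : Type*} [TopologicalSpace α]

def Nice (F : α → Polynomial ℂ) : Prop := ∀ j, Continuous fun y => (F y).coeff j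

lemma Nice.add {F G : α → Polynomial ℂ} (hF : Nice F) (hG : Nice G) :
    Nice (fun y => F y + G y) := by
  intro j
  simp only [Polynomial.coeff_add]
  exact (hF j).add (hG j)

lemma Nice.mul {F G : α → Polynomial ℂ} (hF : Nice F) (hG : Nice G) :
    Nice (fun y => F y * G y) := by
  intro j
  simp only [Polynomial.coeff_mul]
  exact continuous_finset_sum _ fun x _ => (hF x.1).mul (hG x.2)

lemma nice_const (q : Polynomial ℂ) : Nice (fun _ : α => q) := fun _ => continuous_const

lemma Nice.pow {F : α → Polynomial ℂ} (hF : Nice F) (k : ℕ) : Nice (fun y => F y ^ k) := by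
  induction k with
  | zero => simpa using nice_const (α := α) 1
  | succ k ih =>
    have := ih.mul hF
    simpa [pow_succ] using this

lemma Nice.prod {ι : Type*} {s : Finset ι} {F : ι → α → Polynomial ℂ}
    (h : ∀ i ∈ s, Nice (F i)) : Nice (fun y => ∏ i ∈ s, F i y) := by
  classical
  induction s using Finset.cons_induction with
  | empty => simpa using nice_const (α := α) 1
  | cons a s ha ih =>
    have h1 : Nice (fun y => F a y * ∏ i ∈ s, F i y) :=
      (h a (Finset.mem_cons_self a s)).mul (ih fun i hi => h i (Finset.mem_cons_of_mem hi))
    simpa [Finset.prod_insert ha] using h1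

lemma Nice.sum {ι : Type*} {s : Finset ι} {F : ι → α → Polynomial ℂ}
    (h : ∀ i ∈ s, Nice (F i)) : Nice (fun y => ∑ i ∈ s, F i y) := by
  classical
  induction s using Finset.cons_induction with
  | empty => simpa using nice_const (α := α) 0
  | cons a s ha ih =>
    have h1 : Nice (fun y => F a y + ∑ i ∈ s, F i y) :=
      (h a (Finset.mem_cons_self a s)).add (ih fun i hi => h i (Finset.mem_cons_of_mem hi))
    simpa [Finset.sum_insert ha] using h1

lemma nice_CC {f : α → ℂ} (hf : Continuous f) : Nice (fun y => Polynomial.C (f y)) := by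
  intro j
  simp only [Polynomial.coeff_C]
  split
  · exact hf
  · exact continuous_const

lemma nice_lin {f g : α → ℂ} (hf : Continuous f) (hg : Continuous g) :
    Nice (fun y => Polynomial.C (f y) + Polynomial.X * Polynomial.C (g y)) :=
  (nice_CC hf).add ((nice_const Polynomial.X).mul (nice_CC hg))

variable {n : ℕ}

lemma nice_Pline (p : MvPolynomial (Fin n) ℝ) (b : ℂ × (Fin n → ℂ)) :
    Nice (fun a : ℂ × (Fin n → ℂ) => Pline p a b) := by
  have : Nice (fun a : ℂ × (Fin n → ℂ) => ∑ m ∈ p.support,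
      Polynomial.C (((p.coeff m : ℝ) : ℂ)) *
      (Polynomial.C a.1 + Polynomial.X * Polynomial.C b.1) ^ (p.totalDegree - ∑ i, m i) *
      ∏ i, (Polynomial.C (a.2 i) + Polynomial.X * Polynomial.C (b.2 i)) ^ m i) := by
    refine Nice.sum fun m _ => ?_
    refine (Nice.mul (Nice.mul (nice_const _) ?_) ?_)
    · exact (nice_lin continuous_fst continuous_const).pow _
    · exact Nice.prod fun i _ =>
        (nice_lin ((continuous_apply i).comp continuous_snd) continuous_const).pow _
  exact this

lemma continuous_Pev (p : MvPolynomial (Fin n) ℝ) : Continuous (Pev p) := by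
  refine continuous_finset_sum _ fun m _ => ?_
  refine (Continuous.mul (Continuous.mul continuous_const ?_) ?_)
  · exact (continuous_fst.pow _)
  · exact continuous_finset_prod _ fun i _ => ((continuous_apply i).comp continuous_snd).pow _

end Nice

end RZaux

namespace RZaux

open Complex

variable {n : ℕ}

lemma emb_add (v w : ℝ × (Fin n → ℝ)) : emb (v + w) = emb v + emb w := by
  simp only [emb, Prod.ext_iff, Prod.add_def, Pi.add_apply]
  exact ⟨by push_cast; ring, funext fun i => by push_cast; simp⟩

lemma emb_smul (c : ℝ) (v : ℝ × (Fin n → ℝ)) : emb (c • v) = (c : ℂ) • emb v := by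
  simp only [emb, Prod.ext_iff, Prod.smul_def, Pi.smul_apply, smul_eq_mul]
  exact ⟨by push_cast; ring, funext fun i => by push_cast; simp⟩

lemma continuous_emb : Continuous (emb (n := n)) :=
  Continuous.prodMk (Complex.continuous_ofReal.comp continuous_fst)
    (continuous_pi fun i => Complex.continuous_ofReal.comp ((continuous_apply i).comp continuous_snd))

lemma Pev_emb_chart (p : MvPolynomial (Fin n) ℝ) (x : Fin n → ℝ) :
    Pev p (emb (1, x)) = ((MvPolynomial.eval x p : ℝ) : ℂ) := by
  have h1 : emb (n := n) (1, x) = ((1 : ℂ), fun i => ((x i : ℝ) : ℂ)) := by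
    simp [emb, Prod.ext_iff]
  rw [h1, Pev_chart]
  have : (Complex.ofRealHom : ℝ →+* ℂ) (MvPolynomial.eval₂ (RingHom.id ℝ) x p) =
      MvPolynomial.eval₂ (Complex.ofRealHom.comp (RingHom.id ℝ)) (fun i => ((x i : ℝ) : ℂ)) p := by
    rw [MvPolynomial.eval₂_comp_left Complex.ofRealHom (RingHom.id ℝ) x p]
    rfl
  rw [MvPolynomial.eval₂_id] at this
  rw [MvPolynomial.aeval_def]
  rw [show (algebraMap ℝ ℂ) = (Complex.ofRealHom.comp (RingHom.id ℝ)) from rfl]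
  rw [← this]
  rfl

lemma aeval_lineRestrict (p : MvPolynomial (Fin n) ℝ) (u w : Fin n → ℝ) (s : ℂ) :
    Polynomial.aeval s (lineRestrict p u w) =
      MvPolynomial.aeval (fun i => ((u i : ℝ) : ℂ) + s * ((w i : ℝ) : ℂ)) p := by
  rw [lineRestrict]
  rw [show Polynomial.aeval s (MvPolynomial.aeval
      (fun i => Polynomial.C (u i) + Polynomial.X * Polynomial.C (w i)) p) =
    ((Polynomial.aeval s).comp (MvPolynomial.aeval
      (fun i => Polynomial.C (u i) + Polynomial.X * Polynomial.C (w i)))) p from rfl]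
  rw [MvPolynomial.comp_aeval]
  have : (fun i => Polynomial.aeval s (Polynomial.C (u i) + Polynomial.X * Polynomial.C (w i))) =
      (fun i => ((u i : ℝ) : ℂ) + s * ((w i : ℝ) : ℂ)) := by
    funext i
    simp only [map_add, map_mul, Polynomial.aeval_X, Polynomial.aeval_C, Complex.coe_algebraMap]
  rw [this]

/-- Hyperbolicity of the homogenization in direction `(1, u)`, from the real-zero property. -/
lemma hyp_e (p : MvPolynomial (Fin n) ℝ) (u : Fin n → ℝ) (hrz : IsRealZeroAt p u)
    (v : ℝ × (Fin n → ℝ)) (z : ℂ) (hz : Pev p (emb v + z • emb (1, u)) = 0) : z.im = 0 := by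
  set T : ℂ := (v.1 : ℂ) + z with hT
  -- the point in question
  set w : Fin n → ℝ := fun i => v.2 i - v.1 * u i with hw
  have hpoint : emb v + z • emb (1, u) = (T, fun i => T * (u i : ℂ) + (w i : ℂ)) := by
    simp only [emb, Prod.ext_iff, Prod.add_def, Prod.smul_def, smul_eq_mul]
    constructor
    · simp [hT]
    · funext i
      simp only [Pi.add_apply, Pi.smul_apply, smul_eq_mul, hw, hT]
      push_cast
      ring
  by_cases hT0 : T = 0
  · -- z = -v.1 is real
    have : z = -(v.1 : ℂ) := by linear_combination hT0 - hT
    rw [this]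
    simp
  · -- T ≠ 0
    by_cases hw0 : w = 0
    · -- the point is T • (1, u), where Pev doesn't vanish
      exfalso
      have h2 : emb v + z • emb (1, u) = T • ((1 : ℂ), fun i => ((u i : ℝ) : ℂ)) := by
        rw [hpoint]
        simp only [Prod.ext_iff, Prod.smul_def, smul_eq_mul]
        refine ⟨by simp, funext fun i => ?_⟩
        simp [congrFun hw0 i]
      rw [h2] at hz
      have h3 : (T : ℂ) ^ p.totalDegree * Pev p ((1 : ℂ), fun i => ((u i : ℝ) : ℂ)) = 0 := by
        rw [← Pev_smul]; exact hz
      have h4 : Pev p ((1 : ℂ), fun i => ((u i : ℝ) : ℂ)) ≠ 0 := by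
        have := Pev_emb_chart p u
        have he : emb (n := n) (1, u) = ((1 : ℂ), fun i => ((u i : ℝ) : ℂ)) := by
          simp [emb, Prod.ext_iff]
        rw [he] at this
        rw [this]
        exact_mod_cast ne_of_gt hrz.1
      exact h4 (by
        rcases mul_eq_zero.mp h3 with h | h
        · exact absurd h (pow_ne_zero _ hT0)
        · exact h)
    · -- use the real-zero property along direction w
      have hq : MvPolynomial.aeval (fun i => ((u i : ℝ) : ℂ) + T⁻¹ * ((w i : ℝ) : ℂ)) p = 0 := by
        have h2 : emb v + z • emb (1, u) =
            T • ((1 : ℂ), fun i => ((u i : ℝ) : ℂ) + T⁻¹ * ((w i : ℝ) : ℂ)) := by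
          rw [hpoint]
          simp only [Prod.ext_iff, Prod.smul_def, smul_eq_mul]
          refine ⟨by simp, funext fun i => ?_⟩
          simp only [Pi.smul_apply, smul_eq_mul]
          field_simp
        rw [h2, Pev_smul, Pev_chart] at hz
        rcases mul_eq_zero.mp hz with h | h
        · exact absurd h (pow_ne_zero _ hT0)
        · exact h
      have hroot : Polynomial.aeval (T⁻¹) (lineRestrict p u w) = 0 := by
        rw [aeval_lineRestrict]; exact hq
      have him : (T⁻¹).im = 0 := hrz.2 w hw0 T⁻¹ hroot
      have hTim : T.im = 0 := by
        rw [Complex.inv_im] at him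
        have hns : Complex.normSq T ≠ 0 := by
          simpa [Complex.normSq_eq_zero] using hT0
        field_simp at him
        simpa using him
      have hzT : z.im = T.im := by rw [hT]; simp
      rw [hzT, hTim]

namespace RZaux

open Complex Filter Topology

variable {n : ℕ}

/-- The forward cone of `a`. -/
def LamA (p : MvPolynomial (Fin n) ℝ) (a : ℝ × (Fin n → ℝ)) : Set (ℝ × (Fin n → ℝ)) :=
  {v | ∀ s : ℝ, 0 ≤ s → Pev p (emb (v + s • a)) ≠ 0}

def Lset (p : MvPolynomial (Fin n) ℝ) : Set (ℝ × (Fin n → ℝ)) := {v | Pev p (emb v) ≠ 0}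

lemma Pev_e_ne (p : MvPolynomial (Fin n) ℝ) (u : Fin n → ℝ) (hrz : IsRealZeroAt p u) :
    Pev p (emb (1, u)) ≠ 0 := by
  rw [Pev_emb_chart]
  exact_mod_cast ne_of_gt hrz.1

lemma e_mem_LamA (p : MvPolynomial (Fin n) ℝ) (u : Fin n → ℝ) (hrz : IsRealZeroAt p u) :
    (1, u) ∈ LamA p (1, u) := by
  intro s hs
  have h1 : ((1:ℝ), u) + s • ((1:ℝ), u) = (1 + s) • ((1:ℝ), u) := by
    rw [add_smul, one_smul]
  rw [h1, emb_smul, Pev_smul]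
  refine mul_ne_zero (pow_ne_zero _ ?_) (Pev_e_ne p u hrz)
  exact_mod_cast ne_of_gt (by linarith : (0:ℝ) < 1 + s)

lemma mem_LamA_ne (p : MvPolynomial (Fin n) ℝ) {a v : ℝ × (Fin n → ℝ)}
    (hv : v ∈ LamA p a) : Pev p (emb v) ≠ 0 := by
  have := hv 0 le_rfl
  simpa using this

lemma frontier_im_subset (z : ℂ) (hz : z ∈ frontier {w : ℂ | w.im < 0}) : z.im = 0 := by
  have h2 : z.im ≤ 0 := by
    have hsub : closure {w : ℂ | w.im < 0} ⊆ {w : ℂ | w.im ≤ 0} :=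
      closure_minimal (fun w hw => show w.im ≤ 0 from le_of_lt hw)
        (isClosed_le Complex.continuous_im continuous_const)
    exact hsub hz.1
  have hop : IsOpen {w : ℂ | w.im < 0} := isOpen_lt Complex.continuous_im continuous_const
  have h3 := hz.2
  rw [hop.interior_eq] at h3
  exact le_antisymm h2 (not_lt.mp h3)

lemma frontier_re_subset (z : ℂ) (hz : z ∈ frontier {w : ℂ | w.re < 0}) : z.re = 0 := by
  have h2 : z.re ≤ 0 := by
    have hsub : closure {w : ℂ | w.re < 0} ⊆ {w : ℂ | w.re ≤ 0} :=
      closure_minimal (fun w hw => show w.re ≤ 0 from le_of_lt hw)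
        (isClosed_le Complex.continuous_re continuous_const)
    exact hsub hz.1
  have hop : IsOpen {w : ℂ | w.re < 0} := isOpen_lt Complex.continuous_re continuous_const
  have h3 := hz.2
  rw [hop.interior_eq] at h3
  exact le_antisymm h2 (not_lt.mp h3)

/-- Gårding's homotopy lemma. -/
lemma garding_G' (p : MvPolynomial (Fin n) ℝ) (u : Fin n → ℝ) (hrz : IsRealZeroAt p u)
    {a : ℝ × (Fin n → ℝ)} (ha : a ∈ LamA p (1, u)) (x : ℝ × (Fin n → ℝ)) {lam mu : ℂ}
    (hlam : 0 ≤ lam.im) (hmu : 0 < mu.im) :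
    Pev p (emb x + lam • emb a + mu • emb (1, u)) ≠ 0 := by
  intro hzero
  have hae : Pev p (emb a) ≠ 0 := mem_LamA_ne p ha
  have hmu0 : mu ≠ 0 := fun h => by simp [h] at hmu
  have key := RZaux2.key_clopen (Y := ℝ) (A := Set.Icc (0:ℝ) 1) isPreconnected_Icc
    (k := p.totalDegree)
    (F := fun s : ℝ => Pline p ((s : ℂ) • emb x + mu • emb (1, u)) (emb a))
    (L := Pev p (emb a)) hae
    (fun y _ => natDegree_Pline_le _ _ _)
    (fun y _ => coeff_Pline_top _ _ _)
    (fun j => Continuous.continuousOn ((nice_Pline p (emb a) j).comp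
      ((Complex.continuous_ofReal.smul continuous_const).add continuous_const)))
    (O := {w : ℂ | w.im < 0}) (isOpen_lt Complex.continuous_im continuous_const)
    (hfr := ?_) (y₀ := 0) (Set.mem_Icc.mpr ⟨le_rfl, zero_le_one⟩) (h₀ := ?_)
    (y₁ := 1) (Set.mem_Icc.mpr ⟨zero_le_one, le_rfl⟩)
  · -- use the conclusion: lam is a root of F 1
    have hroot : (Pline p ((1 : ℂ) • emb x + mu • emb (1, u)) (emb a)).eval lam = 0 := by
      rw [eval_Pline, one_smul]
      rw [show emb x + mu • emb (1, u) + lam • emb a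
          = emb x + lam • emb a + mu • emb (1, u) by abel]
      exact hzero
    have := key lam (by exact_mod_cast hroot)
    simp only [Set.mem_setOf_eq] at this
    linarith
  · -- no roots on the frontier
    intro s hs z hzr hzfr
    have hzim : z.im = 0 := frontier_im_subset z hzfr
    rw [eval_Pline] at hzr
    have hzre : z = ((z.re : ℝ) : ℂ) := Complex.ext (by simp) (by simp [hzim])
    have harr : (s : ℂ) • emb x + mu • emb (1, u) + z • emb a
        = emb (s • x + z.re • a) + mu • emb (1, u) := by
      rw [emb_add, emb_smul, emb_smul, ← hzre]
      abel
    rw [harr] at hzr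
    exact hmu.ne' (hyp_e p u hrz (s • x + z.re • a) mu hzr)
  · -- base case s = 0 : all roots in the lower half plane
    intro z hzr
    rw [eval_Pline] at hzr
    simp only [Complex.ofReal_zero, zero_smul, zero_add] at hzr
    -- hzr : Pev p (mu • emb (1,u) + z • emb a) = 0
    have hz0 : z ≠ 0 := by
      intro h
      rw [h, zero_smul, add_zero, Pev_smul] at hzr
      exact (mul_ne_zero (pow_ne_zero _ hmu0) (Pev_e_ne p u hrz)) hzr
    have h2 : mu • emb (1, u) + z • emb a = z • (emb a + (mu / z) • emb (1, u)) := by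
      rw [smul_add, smul_smul, mul_div_cancel₀ _ hz0, add_comm]
    rw [h2, Pev_smul] at hzr
    have h3 : Pev p (emb a + (mu / z) • emb (1, u)) = 0 :=
      (mul_eq_zero.mp hzr).resolve_left (pow_ne_zero _ hz0)
    set ζ : ℂ := mu / z with hζ
    have hζim : ζ.im = 0 := hyp_e p u hrz a ζ h3
    have hζ0 : ζ ≠ 0 := div_ne_zero hmu0 hz0
    have hζre : ζ = ((ζ.re : ℝ) : ℂ) := Complex.ext (by simp) (by simp [hζim])
    have hζneg : ζ.re < 0 := by
      by_contra hge
      push_neg at hge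
      refine ha ζ.re hge ?_
      rw [emb_add, emb_smul, ← hζre]
      exact h3
    have hmueq : mu = z * ζ := by
      rw [hζ]
      field_simp
    have him : mu.im = z.im * ζ.re := by
      rw [hmueq, Complex.mul_im, hζim]
      ring
    have : z.im < 0 := by nlinarith [hmu, hζneg, him]
    exact this

/-- `p`'s homogenization is hyperbolic w.r.t. every element of the cone. -/
lemma hyp_mem (p : MvPolynomial (Fin n) ℝ) (u : Fin n → ℝ) (hrz : IsRealZeroAt p u)
    {a : ℝ × (Fin n → ℝ)} (ha : a ∈ LamA p (1, u)) (v : ℝ × (Fin n → ℝ)) (z : ℂ)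
    (hz : Pev p (emb v + z • emb a) = 0) : z.im = 0 := by
  by_contra him
  have hae : Pev p (emb a) ≠ 0 := mem_LamA_ne p ha
  -- conjugate root
  have hconj : Pev p (emb v + (starRingEnd ℂ) z • emb a) = 0 := by
    have hPc := Pev_conj p (emb v + z • emb a)
    have hpt : ((starRingEnd ℂ) ((emb v + z • emb a).1),
        fun i => (starRingEnd ℂ) ((emb v + z • emb a).2 i)) = emb v + (starRingEnd ℂ) z • emb a := by
      refine Prod.ext_iff.mpr ⟨?_, funext fun i => ?_⟩ <;>
        simp [emb, Prod.add_def, Prod.smul_def, Complex.conj_ofReal]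
    rw [hpt] at hPc
    rw [hPc, hz, map_zero]
  obtain ⟨z', hz', him'⟩ : ∃ z' : ℂ, Pev p (emb v + z' • emb a) = 0 ∧ 0 < z'.im := by
    rcases lt_or_gt_of_ne him with h | h
    · exact ⟨(starRingEnd ℂ) z, hconj, by simpa using (by linarith : 0 < -z.im)⟩
    · exact ⟨z, hz, h⟩
  set G := Pline p (emb v) (emb a) with hG
  set g : ℕ → Polynomial ℂ := fun m =>
    Pline p (emb v + (Complex.I * ((1 / (m + 1) : ℝ) : ℂ)) • emb (1, u)) (emb a) with hg
  have hconv : ∀ j, Tendsto (fun m => (g m).coeff j) atTop (𝓝 (G.coeff j)) := by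
    intro j
    have hbase : Tendsto (fun m : ℕ => emb v + (Complex.I * ((1 / (m + 1) : ℝ) : ℂ)) • emb (1, u))
        atTop (𝓝 (emb v)) := by
      have h1 : Tendsto (fun m : ℕ => (Complex.I * ((1 / (m + 1) : ℝ) : ℂ))) atTop (𝓝 0) := by
        have h2 : Tendsto (fun m : ℕ => ((1 / (m + 1) : ℝ) : ℂ)) atTop (𝓝 ((0 : ℝ) : ℂ)) :=
          (Complex.continuous_ofReal.tendsto _).comp tendsto_one_div_add_atTop_nhds_zero_nat
        have := h2.const_mul Complex.I
        simpa using this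
      have h3 : Tendsto (fun m : ℕ => (Complex.I * ((1 / (m + 1) : ℝ) : ℂ)) • emb (1, u) :
          ℕ → ℂ × (Fin n → ℂ)) atTop (𝓝 ((0 : ℂ) • emb (1, u))) :=
        h1.smul_const _
      rw [zero_smul] at h3
      simpa using (tendsto_const_nhds.add h3)
    exact ((nice_Pline p (emb a) j).tendsto _).comp hbase
  have hroots_im : ∀ m w, (g m).eval w = 0 → w.im < 0 := by
    intro m w hw
    rw [hg, eval_Pline] at hw
    by_contra hge
    push_neg at hge
    refine garding_G' p u hrz ha v (lam := w) hge
      (mu := Complex.I * ((1 / (m + 1) : ℝ) : ℂ)) ?_ ?_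
    · simp only [Complex.mul_im, Complex.I_re, Complex.I_im, Complex.ofReal_re, Complex.ofReal_im]
      simp only [zero_mul, one_mul, mul_zero, add_zero, zero_add]
      positivity
    · rw [show emb v + w • emb a + (Complex.I * ((1 / (m + 1) : ℝ) : ℂ)) • emb (1, u)
          = emb v + (Complex.I * ((1 / (m + 1) : ℝ) : ℂ)) • emb (1, u) + w • emb a by abel]
      exact hw
  have hz'root : G.eval z' = 0 := by
    rw [hG, eval_Pline]
    exact hz'
  obtain ⟨φ, w, hφ, hwroot, hwlim⟩ := cor_A hae (fun m => natDegree_Pline_le _ _ _)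
    (natDegree_Pline_le _ _ _) (fun m => coeff_Pline_top _ _ _) (coeff_Pline_top _ _ _)
    hconv hz'root
  have hle : z'.im ≤ 0 := by
    have h1 : Tendsto (fun m => (w m).im) atTop (𝓝 z'.im) :=
      (Complex.continuous_im.tendsto _).comp hwlim
    exact le_of_tendsto h1 (Filter.Eventually.of_forall fun m =>
      (hroots_im (φ m) (w m) (hwroot m)).le)
  linarith

end RZaux

namespace RZaux

open Complex Filter Topology

variable {n : ℕ}

set_option maxHeartbeats 1000000 in
lemma lamA_eq_comp (p : MvPolynomial (Fin n) ℝ) {a : ℝ × (Fin n → ℝ)}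
    (hypa : ∀ (v : ℝ × (Fin n → ℝ)) (z : ℂ), Pev p (emb v + z • emb a) = 0 → z.im = 0)
    (ha0 : Pev p (emb a) ≠ 0) : LamA p a = connectedComponentIn (Lset p) a := by
  apply Set.Subset.antisymm
  · -- cone ⊆ component, via explicit paths
    intro v hv
    set S1 := (fun r : ℝ => (1 - r) • v + (2 * r) • a) '' Set.Icc 0 1 with hS1
    set S2 := (fun r : ℝ => (2 - r) • a) '' Set.Icc 0 1 with hS2
    have hc1 : IsPreconnected S1 :=
      (isPreconnected_Icc).image _ (Continuous.continuousOn (by fun_prop))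
    have hc2 : IsPreconnected S2 :=
      (isPreconnected_Icc).image _ (Continuous.continuousOn (by fun_prop))
    have hS1sub : S1 ⊆ Lset p := by
      rintro y ⟨r, hr, rfl⟩
      rcases eq_or_lt_of_le hr.2 with h1 | h1
      · have hy : (1 - r) • v + (2 * r) • a = (2:ℝ) • a := by
          rw [h1]; norm_num
        show Pev p (emb ((1 - r) • v + (2 * r) • a)) ≠ 0
        rw [hy, emb_smul, Pev_smul]
        exact mul_ne_zero (pow_ne_zero _ (by norm_num)) ha0
      · have hpos : (0:ℝ) < 1 - r := by linarith
        have hy : (1 - r) • v + (2 * r) • a = (1 - r) • (v + (2 * r / (1 - r)) • a) := by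
          have hne : (1:ℝ) - r ≠ 0 := hpos.ne'
          rw [smul_add, smul_smul]
          congr 2
          field_simp
        show Pev p (emb ((1 - r) • v + (2 * r) • a)) ≠ 0
        rw [hy, emb_smul, Pev_smul]
        refine mul_ne_zero (pow_ne_zero _ ?_)
          (hv (2 * r / (1 - r)) (div_nonneg (by linarith [hr.1]) hpos.le))
        exact_mod_cast hpos.ne'
    have hS2sub : S2 ⊆ Lset p := by
      rintro y ⟨r, hr, rfl⟩
      have hpos : (0:ℝ) < 2 - r := by have := hr.2; linarith
      show Pev p (emb ((2 - r) • a)) ≠ 0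
      rw [emb_smul, Pev_smul]
      refine mul_ne_zero (pow_ne_zero _ ?_) ha0
      exact_mod_cast hpos.ne'
    have hmem1 : (2:ℝ) • a ∈ S1 :=
      ⟨1, Set.mem_Icc.mpr ⟨zero_le_one, le_rfl⟩, by norm_num⟩
    have hmem2 : (2:ℝ) • a ∈ S2 :=
      ⟨0, Set.mem_Icc.mpr ⟨le_rfl, zero_le_one⟩, by norm_num⟩
    have hunion : IsPreconnected (S1 ∪ S2) :=
      IsPreconnected.union ((2:ℝ) • a) hmem1 hmem2 hc1 hc2
    have ha_mem : a ∈ S1 ∪ S2 :=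
      Or.inr ⟨1, Set.mem_Icc.mpr ⟨zero_le_one, le_rfl⟩, by norm_num⟩
    have hv_mem : v ∈ S1 ∪ S2 :=
      Or.inl ⟨0, Set.mem_Icc.mpr ⟨le_rfl, zero_le_one⟩, by norm_num⟩
    exact (hunion.subset_connectedComponentIn ha_mem (Set.union_subset hS1sub hS2sub)) hv_mem
  · -- component ⊆ cone, via the clopen root-location argument
    intro v hv
    have key := RZaux2.key_clopen (A := connectedComponentIn (Lset p) a)
      isPreconnected_connectedComponentIn (k := p.totalDegree)
      (F := fun w => Pline p (emb w) (emb a)) (L := Pev p (emb a)) ha0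
      (fun y _ => natDegree_Pline_le _ _ _) (fun y _ => coeff_Pline_top _ _ _)
      (fun j => ((nice_Pline p (emb a) j).comp continuous_emb).continuousOn)
      (O := {w : ℂ | w.re < 0}) (isOpen_lt Complex.continuous_re continuous_const)
      (hfr := ?_) (y₀ := a) (mem_connectedComponentIn ha0) (h₀ := ?_) (y₁ := v) hv
    · intro s hs hPev
      have := key ((s : ℝ) : ℂ) (by
        rw [eval_Pline, ← emb_smul, ← emb_add]
        exact hPev)
      simp only [Set.mem_setOf_eq, Complex.ofReal_re] at this
      linarith
    · -- no roots on the imaginary axis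
      intro y hy z hzr hzfr
      have hzim : z.im = 0 := hypa y z (by rwa [eval_Pline] at hzr)
      have hzre : z.re = 0 := frontier_re_subset z hzfr
      have hz0 : z = 0 := Complex.ext (by simp [hzre]) (by simp [hzim])
      rw [hz0, eval_Pline] at hzr
      simp only [zero_smul, add_zero] at hzr
      exact (connectedComponentIn_subset _ _ hy) hzr
    · -- roots at the base point a
      intro z hzr
      rw [eval_Pline] at hzr
      have h1 : emb a + z • emb a = (1 + z) • emb a := by rw [add_smul, one_smul]
      rw [h1, Pev_smul] at hzr
      have h2 : (1 + z) ^ p.totalDegree = 0 := (mul_eq_zero.mp hzr).resolve_right ha0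
      have h3 : 1 + z = 0 := by
        rcases Nat.eq_zero_or_pos p.totalDegree with h | h
        · rw [h] at h2; simpa using h2
        · exact pow_eq_zero_iff h.ne' |>.mp h2
      have : z.re = -1 := by
        have := congrArg Complex.re h3
        simp at this
        linarith
      simp only [Set.mem_setOf_eq, this]
      norm_num

lemma lam_eq_comp (p : MvPolynomial (Fin n) ℝ) (u : Fin n → ℝ) (hrz : IsRealZeroAt p u) :
    LamA p (1, u) = connectedComponentIn (Lset p) (1, u) :=
  lamA_eq_comp p (hyp_e p u hrz) (Pev_e_ne p u hrz)

lemma mem_lam_comp_eq (p : MvPolynomial (Fin n) ℝ) (u : Fin n → ℝ) (hrz : IsRealZeroAt p u)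
    {b : ℝ × (Fin n → ℝ)} (hb : b ∈ LamA p (1, u)) : LamA p b = LamA p (1, u) := by
  rw [lamA_eq_comp p (hyp_mem p u hrz hb) (mem_LamA_ne p hb), lam_eq_comp p u hrz]
  have hbc : b ∈ connectedComponentIn (Lset p) (1, u) := by
    rw [← lam_eq_comp p u hrz]; exact hb
  exact (connectedComponentIn_eq hbc).symm

lemma smul_mem_lam (p : MvPolynomial (Fin n) ℝ) (u : Fin n → ℝ) {c : ℝ} (hc : 0 < c)
    {v : ℝ × (Fin n → ℝ)} (hv : v ∈ LamA p (1, u)) : c • v ∈ LamA p (1, u) := by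
  intro s hs
  have h1 : c • v + s • ((1:ℝ), u) = c • (v + (s / c) • ((1:ℝ), u)) := by
    rw [smul_add, smul_smul]
    congr 2
    field_simp
  rw [h1, emb_smul, Pev_smul]
  refine mul_ne_zero (pow_ne_zero _ ?_) (hv (s / c) (div_nonneg hs hc.le))
  exact_mod_cast hc.ne'

lemma add_e_mem_lam (p : MvPolynomial (Fin n) ℝ) (u : Fin n → ℝ)
    {v : ℝ × (Fin n → ℝ)} (hv : v ∈ LamA p (1, u)) {t : ℝ} (ht : 0 ≤ t) :
    v + t • ((1:ℝ), u) ∈ LamA p (1, u) := by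
  intro s hs
  rw [add_assoc, ← add_smul]
  exact hv (t + s) (by linarith)

lemma add_mem_lam (p : MvPolynomial (Fin n) ℝ) (u : Fin n → ℝ) (hrz : IsRealZeroAt p u)
    {a b : ℝ × (Fin n → ℝ)} (ha : a ∈ LamA p (1, u)) (hb : b ∈ LamA p (1, u))
    {t : ℝ} (ht : 0 ≤ t) : a + t • b ∈ LamA p (1, u) := by
  intro s hs
  have h1 : a + s • ((1:ℝ), u) ∈ LamA p (1, u) := add_e_mem_lam p u ha hs
  have h2 : a + s • ((1:ℝ), u) ∈ LamA p b := by
    rw [mem_lam_comp_eq p u hrz hb]; exact h1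
  have h3 := h2 t ht
  rw [show a + t • b + s • ((1:ℝ), u) = a + s • ((1:ℝ), u) + t • b by abel]
  exact h3

lemma segment_mem_lam (p : MvPolynomial (Fin n) ℝ) (u : Fin n → ℝ) (hrz : IsRealZeroAt p u)
    {a b : ℝ × (Fin n → ℝ)} (ha : a ∈ LamA p (1, u)) (hb : b ∈ LamA p (1, u))
    {t : ℝ} (ht : 0 ≤ t) (ht1 : t ≤ 1) : (1 - t) • a + t • b ∈ LamA p (1, u) := by
  rcases eq_or_lt_of_le ht1 with h | h
  · have hy : (1 - t) • a + t • b = b := by rw [h]; simp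
    rw [hy]
    exact hb
  · have hne : (1:ℝ) - t ≠ 0 := by intro h0; rw [sub_eq_zero] at h0; exact h.ne h0.symm
    have h1 : (1 - t) • a + t • b = (1 - t) • (a + (t / (1 - t)) • b) := by
      rw [smul_add, smul_smul]
      congr 2
      field_simp
    rw [h1]
    exact smul_mem_lam p u (by linarith)
      (add_mem_lam p u hrz ha hb (div_nonneg ht (by linarith)))

lemma Pev_real (p : MvPolynomial (Fin n) ℝ) (v : ℝ × (Fin n → ℝ)) :
    Pev p (emb v) = (((Pev p (emb v)).re : ℝ) : ℂ) := by
  have h := Pev_conj p (emb v)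
  have hfix : ((starRingEnd ℂ) ((emb v).1 : ℂ), fun i => (starRingEnd ℂ) ((emb v).2 i))
      = emb (n := n) v := by
    refine Prod.ext_iff.mpr ⟨?_, funext fun i => ?_⟩ <;> simp [emb, Complex.conj_ofReal]
  rw [hfix] at h
  have him : (Pev p (emb v)).im = 0 := by
    have h2 := congrArg Complex.im h
    simp only [Complex.conj_im] at h2
    linarith
  exact Complex.ext (by simp) (by simp [him])

lemma pos_on_lam (p : MvPolynomial (Fin n) ℝ) (u : Fin n → ℝ) (hrz : IsRealZeroAt p u)
    {v : ℝ × (Fin n → ℝ)} (hv : v ∈ LamA p (1, u)) : 0 < (Pev p (emb v)).re := by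
  by_contra hle
  push_neg at hle
  set g : (ℝ × (Fin n → ℝ)) → ℝ := fun w => (Pev p (emb w)).re with hgdef
  have hgcont : Continuous g := Complex.continuous_re.comp ((continuous_Pev p).comp continuous_emb)
  set A := connectedComponentIn (Lset p) ((1:ℝ), u) with hA
  have hAconn : IsPreconnected A := isPreconnected_connectedComponentIn
  have himg : IsPreconnected (g '' A) := hAconn.image g hgcont.continuousOn
  have hvA : v ∈ A := by rw [hA, ← lam_eq_comp p u hrz]; exact hv
  have heA : ((1:ℝ), u) ∈ A := mem_connectedComponentIn (Pev_e_ne p u hrz)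
  have hge : 0 < g ((1:ℝ), u) := by
    rw [hgdef]
    simp only [Pev_emb_chart]
    simpa using hrz.1
  have hgvne : g v ≠ 0 := by
    intro h0
    have : Pev p (emb v) = 0 := by
      rw [Pev_real p v]
      exact Complex.ofReal_eq_zero.mpr h0
    exact (mem_LamA_ne p hv) this
  have h0mem : (0:ℝ) ∈ g '' A := by
    refine himg.Icc_subset (Set.mem_image_of_mem g hvA) (Set.mem_image_of_mem g heA) ?_
    exact Set.mem_Icc.mpr ⟨lt_of_le_of_ne hle hgvne |>.le, hge.le⟩
  obtain ⟨w, hwA, hw0⟩ := h0mem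
  have : Pev p (emb w) = 0 := by
    rw [Pev_real p w]
    exact Complex.ofReal_eq_zero.mpr hw0
  exact (connectedComponentIn_subset _ _ hwA) this

end RZaux

end RZaux


open RZaux RZaux.RZaux

/-- If `p` is real zero with respect to `u`, then the algebraic interior
`S = 𝒞_p(u)` is convex, and `p` is real zero with respect to every interior point of `S`. -/
theorem realZero_convex_and_everywhere (n : ℕ) (p : MvPolynomial (Fin n) ℝ) (u : Fin n → ℝ)
    (hp : IsRealZeroAt p u) :
    Convex ℝ (algInt p u) ∧ ∀ u' ∈ interior (algInt p u), IsRealZeroAt p u' := by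
  classical
  set W : Set (Fin n → ℝ) := {x | 0 < eval x p} with hW
  set Lam : Set (ℝ × (Fin n → ℝ)) := LamA p (1, u) with hLam
  set K : Set (Fin n → ℝ) := {x | ((1:ℝ), x) ∈ Lam} with hK
  have hcont1 : Continuous (fun x : Fin n → ℝ => ((1:ℝ), x)) :=
    continuous_const.prodMk continuous_id
  have huK : u ∈ K := e_mem_LamA p u hp
  have hKW : K ⊆ W := by
    intro x hx
    have hpos := pos_on_lam p u hp hx
    rw [Pev_emb_chart] at hpos
    simpa [hW] using hpos
  have hKconv : Convex ℝ K := by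
    intro x hx y hy s t hs ht hst
    have hseg := segment_mem_lam p u hp hx hy ht (by linarith)
    have harr : ((1:ℝ), s • x + t • y) = (1 - t) • ((1:ℝ), x) + t • ((1:ℝ), y) := by
      have hs' : s = 1 - t := by linarith
      refine Prod.ext_iff.mpr ⟨by simp, ?_⟩
      show s • x + t • y = (1 - t) • x + t • y
      rw [hs']
    show ((1:ℝ), s • x + t • y) ∈ Lam
    rw [harr]
    exact hseg
  have hLsetOpen : IsOpen (Lset p) :=
    IsOpen.preimage ((continuous_Pev p).comp continuous_emb) isOpen_ne
  have hLamOpen : IsOpen Lam := by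
    rw [hLam, lam_eq_comp p u hp]
    exact IsOpen.connectedComponentIn hLsetOpen
  have hKopen : IsOpen K := hLamOpen.preimage hcont1
  set C := connectedComponentIn W u with hC
  have huC : u ∈ C := mem_connectedComponentIn (by simpa [hW] using hp.1)
  have hCK : C = K := by
    apply Set.Subset.antisymm
    · have hU2open : IsOpen (Lset p \ connectedComponentIn (Lset p) (1, u)) := by
        refine isOpen_iff_forall_mem_open.mpr fun w hw => ?_
        refine ⟨connectedComponentIn (Lset p) w, ?_, IsOpen.connectedComponentIn hLsetOpen,
          mem_connectedComponentIn hw.1⟩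
        intro y hy
        refine ⟨connectedComponentIn_subset _ _ hy, fun hmem => ?_⟩
        have h1 := connectedComponentIn_eq hy
        have h2 := connectedComponentIn_eq hmem
        have hwmem : w ∈ connectedComponentIn (Lset p) ((1:ℝ), u) := by
          rw [h2, ← h1]
          exact mem_connectedComponentIn hw.1
        exact hw.2 hwmem
      have hsub : C ⊆ K ∪ ((fun x => ((1:ℝ), x)) ⁻¹'
          (Lset p \ connectedComponentIn (Lset p) (1, u))) := by
        intro x hxC
        have hxW : x ∈ W := connectedComponentIn_subset _ _ hxC
        have hxL : ((1:ℝ), x) ∈ Lset p := by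
          show Pev p (emb (1, x)) ≠ 0
          rw [Pev_emb_chart]
          exact_mod_cast ne_of_gt (by simpa [hW] using hxW)
        by_cases hmem : ((1:ℝ), x) ∈ connectedComponentIn (Lset p) ((1:ℝ), u)
        · left
          show ((1:ℝ), x) ∈ Lam
          rw [hLam, lam_eq_comp p u hp]
          exact hmem
        · right
          exact ⟨hxL, hmem⟩
      have hdisj : Disjoint K ((fun x => ((1:ℝ), x)) ⁻¹'
          (Lset p \ connectedComponentIn (Lset p) (1, u))) := by
        rw [Set.disjoint_left]
        intro x hx1 hx2
        have hmem : ((1:ℝ), x) ∈ connectedComponentIn (Lset p) ((1:ℝ), u) := by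
          rw [← lam_eq_comp p u hp]
          exact hx1
        exact hx2.2 hmem
      have hCpre : IsPreconnected C := isPreconnected_connectedComponentIn
      have hne : (C ∩ K).Nonempty := ⟨u, huC, huK⟩
      exact hCpre.subset_left_of_subset_union hKopen (hU2open.preimage hcont1) hdisj hsub hne
    · exact (hKconv.isPreconnected).subset_connectedComponentIn huK hKW
  have halg : algInt p u = closure C := by rw [algInt]
  constructor
  · rw [halg, hCK]
    exact hKconv.closure
  · intro u' hu'
    rw [halg] at hu'
    have hCopen : IsOpen C := by rw [hCK]; exact hKopen
    have hCconv : Convex ℝ C := by rw [hCK]; exact hKconv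
    have hu'C : u' ∈ C := by
      by_cases hequ : u' = u
      · rw [hequ]; exact huC
      · obtain ⟨ε, hε, hball⟩ := Metric.isOpen_iff.mp isOpen_interior u' hu'
        have hnormpos : 0 < ‖u' - u‖ := by
          rw [norm_pos_iff, sub_ne_zero]
          exact hequ
        set δ : ℝ := ε / (2 * ‖u' - u‖) with hδ
        have hδpos : 0 < δ := by positivity
        set y : Fin n → ℝ := u' + δ • (u' - u) with hy
        have hyball : y ∈ Metric.ball u' ε := by
          rw [Metric.mem_ball, dist_eq_norm]
          have : y - u' = δ • (u' - u) := by rw [hy]; abel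
          rw [this, norm_smul]
          simp only [Real.norm_eq_abs, abs_of_pos hδpos]
          rw [hδ]
          rw [div_mul_eq_mul_div, mul_comm]
          rw [mul_comm (2:ℝ) ‖u' - u‖, ← div_div]
          field_simp
          linarith
        have hycl : y ∈ closure C := interior_subset (hball hyball)
        have h1δ : (0:ℝ) < 1 + δ := by linarith
        have hcombo : (δ / (1 + δ)) • u + (1 / (1 + δ)) • y = u' := by
          rw [hy]
          match_scalars <;> field_simp <;> ring
        have huint : u ∈ interior C := by rw [hCopen.interior_eq]; exact huC
        have hmem := hCconv.combo_interior_closure_mem_interior huint hycl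
          (by positivity : 0 < δ / (1 + δ)) (by positivity : (0:ℝ) ≤ 1 / (1 + δ))
          (by field_simp; ring)
        rw [hcombo] at hmem
        rw [hCopen.interior_eq] at hmem
        exact hmem
    have hu'K : u' ∈ K := by rw [← hCK]; exact hu'C
    refine ⟨by simpa [hW] using hKW hu'K, ?_⟩
    intro w hw z hz
    rw [aeval_lineRestrict] at hz
    have hz' : Pev p (emb ((1:ℝ), u') + z • emb ((0:ℝ), w)) = 0 := by
      have harr : emb ((1:ℝ), u') + z • emb ((0:ℝ), w)
          = ((1:ℂ), fun i => ((u' i : ℝ) : ℂ) + z * ((w i : ℝ) : ℂ)) := by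
        refine Prod.ext_iff.mpr ⟨?_, funext fun i => ?_⟩ <;>
          simp [RZaux.emb, Prod.add_def, Prod.smul_def]
      rw [harr, Pev_chart]
      exact hz
    by_cases hz0 : z = 0
    · rw [hz0]; simp
    · have h2 : emb ((1:ℝ), u') + z • emb ((0:ℝ), w)
          = z • (emb ((0:ℝ), w) + z⁻¹ • emb ((1:ℝ), u')) := by
        rw [smul_add, smul_smul, mul_inv_cancel₀ hz0, one_smul, add_comm]
      rw [h2, Pev_smul] at hz'
      have h3 : Pev p (emb ((0:ℝ), w) + z⁻¹ • emb ((1:ℝ), u')) = 0 :=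
        (mul_eq_zero.mp hz').resolve_left (pow_ne_zero _ hz0)
      have h4 : (z⁻¹).im = 0 := hyp_mem p u hp hu'K ((0:ℝ), w) z⁻¹ h3
      rw [Complex.inv_im] at h4
      have hns : Complex.normSq z ≠ 0 := by simpa [Complex.normSq_eq_zero] using hz0
      field_simp at h4
      simpa using h4
end

section
/- Let S₁ ⊆ S₂ ⊆ ℝⁿ be two rigidly convex sets, and let p be the defining polynomial of S₂. If p vanishes identically on the boundary ∂S₁, then S₁ = S₂. -/
open MvPolynomial

/-- `p` is the defining polynomial of the algebraic interior `S`: it realizes `S` and has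
minimal degree among all polynomials realizing `S`. -/
def IsDefiningPoly {n : ℕ} (S : Set (Fin n → ℝ)) (p : MvPolynomial (Fin n) ℝ) : Prop :=
  (∃ x0 : Fin n → ℝ, 0 < eval x0 p ∧ S = algInt p x0) ∧
    ∀ (q : MvPolynomial (Fin n) ℝ) (x0' : Fin n → ℝ), 0 < eval x0' q → S = algInt q x0' →
      p.totalDegree ≤ q.totalDegree

/-- A rigidly convex set: an algebraic interior whose defining polynomial is real zero with
respect to some interior point. -/
def RigidlyConvex {n : ℕ} (S : Set (Fin n → ℝ)) : Prop :=
  ∃ p : MvPolynomial (Fin n) ℝ, IsDefiningPoly S p ∧ ∃ u ∈ interior S, IsRealZeroAt p u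

/-!
The component `C` of `{p > 0}` whose closure is `S₂` meets `S₁`, because `S₁` contains a
nonempty open set (a component of `{p₁ > 0}`) and lies in `S₂ = closure C`. Since `p > 0` on `C`
and `p = 0` on `∂S₁`, the connected set `C` never crosses `∂S₁`, so `C ⊆ S₁` and hence
`S₂ = closure C ⊆ S₁`.
-/

open Set

theorem IsPreconnected.subset_of_disjoint_frontier {α : Type*} [TopologicalSpace α]
    {C S : Set α} (hC : IsPreconnected C) (hCS : Disjoint C (frontier S))
    (hne : (C ∩ S).Nonempty) : C ⊆ S := by
  have hcover : C ⊆ interior S ∪ interior Sᶜ :=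
    compl_frontier_eq_union_interior (s := S) ▸ hCS.subset_compl_right
  obtain ⟨x, hxC, hxS⟩ := hne
  have hx : x ∈ interior S := (hcover hxC).resolve_right fun h => interior_subset h hxS
  exact (hC.subset_left_of_subset_union isOpen_interior isOpen_interior
    (disjoint_compl_right.mono interior_subset interior_subset) hcover ⟨x, hxC, hx⟩).trans
      interior_subset

section AlgebraicInterior

variable {n : ℕ}

theorem isOpen_connectedComponentIn_eval_pos (p : MvPolynomial (Fin n) ℝ) (x : Fin n → ℝ) :
    IsOpen (connectedComponentIn {y | 0 < eval y p} x) :=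
  (isOpen_lt continuous_const (continuous_eval p)).connectedComponentIn

theorem connectedComponentIn_inter_algInt_nonempty {p q : MvPolynomial (Fin n) ℝ}
    {x y : Fin n → ℝ} (hx : 0 < eval x p) (hsub : algInt p x ⊆ algInt q y) :
    (connectedComponentIn {z | 0 < eval z q} y ∩ algInt p x).Nonempty := by
  have hx_mem : x ∈ connectedComponentIn {z | 0 < eval z p} x := mem_connectedComponentIn hx
  have hmeet : (closure (connectedComponentIn {z | 0 < eval z q} y) ∩
      connectedComponentIn {z | 0 < eval z p} x).Nonempty :=
    ⟨x, hsub (subset_closure hx_mem), hx_mem⟩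
  rw [closure_inter_open_nonempty_iff (isOpen_connectedComponentIn_eval_pos p x)] at hmeet
  exact hmeet.mono (inter_subset_inter_right _ subset_closure)

theorem algInt_subset_of_eval_eq_zero_on_frontier {p : MvPolynomial (Fin n) ℝ}
    {x : Fin n → ℝ} {S : Set (Fin n → ℝ)} (hS : IsClosed S)
    (hmeet : (connectedComponentIn {z | 0 < eval z p} x ∩ S).Nonempty)
    (hvan : ∀ a ∈ frontier S, eval a p = 0) : algInt p x ⊆ S := by
  have hdisj : Disjoint (connectedComponentIn {z | 0 < eval z p} x) (frontier S) :=
    disjoint_left.2 fun a ha hfr =>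
      (connectedComponentIn_subset {z | 0 < eval z p} x ha).ne' (hvan a hfr)
  exact closure_minimal (isPreconnected_connectedComponentIn.subset_of_disjoint_frontier hdisj
    hmeet) hS

end AlgebraicInterior

theorem rigidlyConvex_eq_of_defining_vanishes_on_boundary_general (n : ℕ)
    (S1 S2 : Set (Fin n → ℝ)) (h1 : RigidlyConvex S1)
    (hsub : S1 ⊆ S2) (p : MvPolynomial (Fin n) ℝ) (hp : IsDefiningPoly S2 p)
    (hvan : ∀ a ∈ frontier S1, eval a p = 0) : S1 = S2 := by
  obtain ⟨p1, ⟨⟨x1, hx1, rfl⟩, -⟩, -⟩ := h1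
  obtain ⟨⟨x0, -, rfl⟩, -⟩ := hp
  exact hsub.antisymm (algInt_subset_of_eval_eq_zero_on_frontier isClosed_closure
    (connectedComponentIn_inter_algInt_nonempty hx1 hsub) hvan)

/-- If `S₁ ⊆ S₂` are rigidly convex and the defining polynomial `p` of `S₂`
vanishes identically on `∂S₁`, then `S₁ = S₂`. -/
theorem rigidlyConvex_eq_of_defining_vanishes_on_boundary (n : ℕ)
    (S1 S2 : Set (Fin n → ℝ)) (h1 : RigidlyConvex S1) (h2 : RigidlyConvex S2)
    (hsub : S1 ⊆ S2) (p : MvPolynomial (Fin n) ℝ) (hp : IsDefiningPoly S2 p)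
    (hvan : ∀ a ∈ frontier S1, eval a p = 0) : S1 = S2 :=
  rigidlyConvex_eq_of_defining_vanishes_on_boundary_general n S1 S2 h1 hsub p hp hvan
end

section
/- Let K act orthogonally on V with polar section 𝔞 and Weyl group W (so (K·v) ∩ 𝔞 = W·v for v ∈ 𝔞), and suppose the restriction map ℝ[V]^K → ℝ[𝔞]^W is an isomorphism. If S ⊆ 𝔞 is a W-invariant rigidly convex set with defining polynomial p, and p̃ ∈ ℝ[V]^K is the unique K-invariant extension of p, then for every v ∈ V the univariate polynomial t ↦ p̃(tv) has only real zeros, provided p is real zero with respect to 0 ∈ 𝔞. -/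
/-!
Each `v` is moved into the section `𝔞` by some `g ∈ K`, and `K`-invariance of `p̃` makes
`t ↦ p̃(tv)` coincide with `t ↦ p̃(t • g v)`, which is real-rooted by assumption; for `v = 0`
the polynomial is the nonzero constant `p̃(0)`.
-/

open Matrix MvPolynomial

theorem eval_lineRestrict {n : ℕ} (p : MvPolynomial (Fin n) ℝ) (u w : Fin n → ℝ) (t : ℝ) :
    (lineRestrict p u w).eval t = eval (u + t • w) p := by
  rw [← Polynomial.coe_aeval_eq_eval, lineRestrict, ← AlgHom.comp_apply, MvPolynomial.comp_aeval,
    MvPolynomial.aeval_eq_eval]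
  congr 2 with i
  simp [mul_comm t]

theorem lineRestrict_zero_right {n : ℕ} (p : MvPolynomial (Fin n) ℝ) (u : Fin n → ℝ) :
    lineRestrict p u 0 = Polynomial.C (eval u p) :=
  Polynomial.funext fun t => by simp [eval_lineRestrict]

theorem lineRestrict_map_of_invariant {n : ℕ} {p : MvPolynomial (Fin n) ℝ}
    (A : (Fin n → ℝ) →ₗ[ℝ] (Fin n → ℝ)) (hA : ∀ x, eval (A x) p = eval x p) (u w : Fin n → ℝ) :
    lineRestrict p (A u) (A w) = lineRestrict p u w :=
  Polynomial.funext fun t => by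
    rw [eval_lineRestrict, eval_lineRestrict, ← map_smul, ← map_add, hA]

theorem onlyRealRoots_C {c : ℝ} (hc : c ≠ 0) : OnlyRealRoots (Polynomial.C c) := by
  intro z hz
  simp [hc] at hz

theorem invariant_extension_real_rooted_general (N : ℕ)
    (K : Type) [Group K] (ρ : K →* ((Fin N → ℝ) ≃ₗ[ℝ] (Fin N → ℝ)))
    (𝔞 : Submodule ℝ (Fin N → ℝ))
    (hsec : ∀ x : Fin N → ℝ, ∃ g : K, ρ g x ∈ 𝔞)
    (ptilde : MvPolynomial (Fin N) ℝ)
    (hinv : ∀ (g : K) (x : Fin N → ℝ), eval (ρ g x) ptilde = eval x ptilde)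
    (hpos : 0 < eval (0 : Fin N → ℝ) ptilde)
    (hRZ : ∀ w ∈ 𝔞, w ≠ 0 → OnlyRealRoots (lineRestrict ptilde 0 w)) :
    ∀ v : Fin N → ℝ, OnlyRealRoots (lineRestrict ptilde 0 v) := by
  intro v
  obtain rfl | hv := eq_or_ne v 0
  · rw [lineRestrict_zero_right]
    exact onlyRealRoots_C hpos.ne'
  obtain ⟨g, hg⟩ := hsec v
  have hline : lineRestrict ptilde 0 (ρ g v) = lineRestrict ptilde 0 v := by
    simpa using lineRestrict_map_of_invariant (ρ g).toLinearMap (hinv g) 0 v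
  exact hline ▸ hRZ _ hg ((ρ g).map_ne_zero_iff.mpr hv)

/-- Let `K` act orthogonally on `ℝᴺ` with polar section `𝔞` meeting every
orbit, and let `p̃` be a `K`-invariant polynomial whose restriction `p` to `𝔞` is real zero
with respect to `0 ∈ 𝔞` (i.e. `p̃(0) > 0` and for every nonzero `w ∈ 𝔞` the polynomial
`t ↦ p̃(tw)` has only real roots).  Then for every `v ∈ ℝᴺ` the univariate polynomial
`t ↦ p̃(tv)` has only real zeros. -/
theorem invariant_extension_real_rooted (N : ℕ)
    (K : Type) [Group K] (ρ : K →* ((Fin N → ℝ) ≃ₗ[ℝ] (Fin N → ℝ)))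
    (horth : ∀ (g : K) (x y : Fin N → ℝ), (ρ g x) ⬝ᵥ (ρ g y) = x ⬝ᵥ y)
    (𝔞 : Submodule ℝ (Fin N → ℝ))
    (hsec : ∀ x : Fin N → ℝ, ∃ g : K, ρ g x ∈ 𝔞)
    (ptilde : MvPolynomial (Fin N) ℝ)
    (hinv : ∀ (g : K) (x : Fin N → ℝ), eval (ρ g x) ptilde = eval x ptilde)
    (hpos : 0 < eval (0 : Fin N → ℝ) ptilde)
    (hRZ : ∀ w ∈ 𝔞, w ≠ 0 → OnlyRealRoots (lineRestrict ptilde 0 w)) :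
    ∀ v : Fin N → ℝ, OnlyRealRoots (lineRestrict ptilde 0 v) :=
  invariant_extension_real_rooted_general N K ρ 𝔞 hsec ptilde hinv hpos hRZ
end

section
/- The set of 2×2 positive semidefinite Hermitian matrices, identified with {(a₁₁, a₁₂, a₂₂, b₁₂) ∈ ℝ⁴ : [[a₁₁, a₁₂ + i·b₁₂],[a₁₂ − i·b₁₂, a₂₂]] ⪰ 0}, equals the spectrahedron {(a₁₁, a₁₂, a₂₂, b₁₂) : the real symmetric 3×3 matrix [[a₁₁, a₁₂, 0],[a₁₂, a₂₂, b₁₂],[0, b₁₂, a₁₁]] ⪰ 0}. -/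
open Matrix Complex
open scoped ComplexOrder

lemma herm_psd_iff_aux (a11 a12 a22 b12 : ℝ) :
    (!![(a11 : ℂ), (a12 : ℂ) + b12 * Complex.I;
        (a12 : ℂ) - b12 * Complex.I, (a22 : ℂ)]).PosSemidef ↔
    (0 ≤ a11 ∧ 0 ≤ a22 ∧ a12 ^ 2 + b12 ^ 2 ≤ a11 * a22) := by
  constructor
  · intro h
    have h1 : 0 ≤ a11 := by
      have := h.dotProduct_mulVec_nonneg ![1, 0]
      simpa [dotProduct, Matrix.mulVec, Fin.sum_univ_succ, Complex.le_def] using this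
    have h2 : 0 ≤ a22 := by
      have := h.dotProduct_mulVec_nonneg ![0, 1]
      simpa [dotProduct, Matrix.mulVec, Fin.sum_univ_succ, Complex.le_def] using this
    refine ⟨h1, h2, ?_⟩
    have key : ∀ t : ℝ, 0 ≤ (a11 * (a12 ^ 2 + b12 ^ 2)) * (t * t) +
        (-2 * (a12 ^ 2 + b12 ^ 2)) * t + a22 := by
      intro t
      have := h.dotProduct_mulVec_nonneg ![(-(a12 : ℂ) - b12 * Complex.I) * t, 1]
      simp only [dotProduct, Matrix.mulVec, Fin.sum_univ_succ, Fin.sum_univ_zero,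
        Matrix.cons_val_zero, Matrix.cons_val_one, Matrix.head_cons, Pi.star_apply,
        add_zero, Complex.le_def] at this
      simp [Complex.add_re, Complex.mul_re, Complex.add_im, Complex.mul_im] at this
      nlinarith [this.1]
    have hd := discrim_le_zero key
    rw [discrim] at hd
    nlinarith [mul_nonneg h1 h2, sq_nonneg a12, sq_nonneg b12, sq_nonneg (a12^2 + b12^2)]
  · rintro ⟨h1, h2, h3⟩
    rw [Matrix.posSemidef_iff_dotProduct_mulVec]
    constructor
    · ext i j
      fin_cases i <;> fin_cases j <;>
        simp [Matrix.conjTranspose_apply, Complex.ext_iff]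
    · intro x
      simp only [dotProduct, Matrix.mulVec, Fin.sum_univ_succ, Fin.sum_univ_zero,
        Matrix.cons_val_zero, Matrix.cons_val_one, Matrix.head_cons, Pi.star_apply,
        add_zero, Complex.le_def]
      set p := (x 0).re; set q := (x 0).im; set r := (x 1).re; set s := (x 1).im
      constructor
      · simp [Complex.add_re, Complex.mul_re, Complex.add_im, Complex.mul_im]
        rcases h1.lt_or_eq with ha | ha
        · nlinarith [sq_nonneg (a11*p + a12*r - b12*s), sq_nonneg (a11*q + a12*s + b12*r),
            mul_nonneg (sub_nonneg.2 h3) (add_nonneg (sq_nonneg r) (sq_nonneg s)), ha]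
        · have ha12 : a12 = 0 := by nlinarith [sq_nonneg a12, sq_nonneg b12]
          have hb12 : b12 = 0 := by nlinarith [sq_nonneg a12, sq_nonneg b12]
          subst ha12 hb12
          rw [← ha]
          nlinarith [sq_nonneg r, sq_nonneg s]
      · simp [Complex.add_im, Complex.mul_im, Complex.mul_re]
        ring

lemma real3_psd_iff_aux (a11 a12 a22 b12 : ℝ) :
    (!![a11, a12, 0;
        a12, a22, b12;
        0, b12, a11]).PosSemidef ↔
    (0 ≤ a11 ∧ 0 ≤ a22 ∧ a12 ^ 2 + b12 ^ 2 ≤ a11 * a22) := by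
  constructor
  · intro h
    have h1 : 0 ≤ a11 := by
      have := h.dotProduct_mulVec_nonneg ![1, 0, 0]
      simpa [dotProduct, Matrix.mulVec, Fin.sum_univ_succ] using this
    have h2 : 0 ≤ a22 := by
      have := h.dotProduct_mulVec_nonneg ![0, 1, 0]
      simpa [dotProduct, Matrix.mulVec, Fin.sum_univ_succ] using this
    refine ⟨h1, h2, ?_⟩
    have key : ∀ t : ℝ, 0 ≤ (a11 * (a12 ^ 2 + b12 ^ 2)) * (t * t) +
        (-2 * (a12 ^ 2 + b12 ^ 2)) * t + a22 := by
      intro t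
      have := h.dotProduct_mulVec_nonneg ![-a12 * t, 1, -b12 * t]
      simp [dotProduct, Matrix.mulVec, Fin.sum_univ_succ] at this
      nlinarith [this]
    have hd := discrim_le_zero key
    rw [discrim] at hd
    nlinarith [mul_nonneg h1 h2, sq_nonneg a12, sq_nonneg b12, sq_nonneg (a12^2 + b12^2)]
  · rintro ⟨h1, h2, h3⟩
    rw [Matrix.posSemidef_iff_dotProduct_mulVec]
    constructor
    · ext i j
      fin_cases i <;> fin_cases j <;> simp [Matrix.conjTranspose_apply]
    · intro x
      simp [dotProduct, Matrix.mulVec, Fin.sum_univ_succ]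
      set p := x 0; set q := x 1; set r := x 2
      rcases h1.lt_or_eq with ha | ha
      · nlinarith [sq_nonneg (a11*p + a12*q), sq_nonneg (a11*r + b12*q),
          mul_nonneg (sub_nonneg.2 h3) (sq_nonneg q), ha]
      · have ha12 : a12 = 0 := by nlinarith [sq_nonneg a12, sq_nonneg b12]
        have hb12 : b12 = 0 := by nlinarith [sq_nonneg a12, sq_nonneg b12]
        subst ha12 hb12
        rw [← ha]
        nlinarith [sq_nonneg q]

/-- The set of positive semidefinite `2×2` Hermitian matrices, in coordinates
`(a₁₁, a₁₂, a₂₂, b₁₂)`, equals the spectrahedron given by the real symmetric `3×3` matrix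
`[[a₁₁, a₁₂, 0],[a₁₂, a₂₂, b₁₂],[0, b₁₂, a₁₁]] ⪰ 0`. -/
theorem hermitian_psd_iff_real_spectrahedron (a11 a12 a22 b12 : ℝ) :
    (!![(a11 : ℂ), (a12 : ℂ) + b12 * Complex.I;
        (a12 : ℂ) - b12 * Complex.I, (a22 : ℂ)]).PosSemidef ↔
    (!![a11, a12, 0;
        a12, a22, b12;
        0, b12, a11]).PosSemidef := by
  rw [herm_psd_iff_aux, real3_psd_iff_aux]
end

section
/- For the Hopf action of U(1) on ℂ², e^{it}·(z₁,z₂) = (e^{it}z₁, e^{it}z₂), the real subspace 𝔞 = {(z₁,z₂) : Im z₂ = 0} meets every orbit, yet for the convex hull 𝒪 of the orbit of (1,1), the orthogonal projection Π(𝒪) of 𝒪 onto 𝔞 strictly contains 𝒪 ∩ 𝔞: indeed 𝒪 ∩ 𝔞 is the line segment with endpoints ±(1,1), while Π(𝒪) contains the curve {(e^{it}, cos t) : t ∈ ℝ} and hence is not contained in that segment. -/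
open Complex

/-- The Hopf orbit of `(1,1) ∈ ℂ²` under `U(1)`: the circle `{(e^{it}, e^{it}) : t ∈ ℝ}`. -/
def hopfOrbit : Set (ℂ × ℂ) :=
  {z | ∃ t : ℝ, z = (Complex.exp (t * Complex.I), Complex.exp (t * Complex.I))}

/-- Its convex hull (over ℝ). -/
noncomputable def hopfHull : Set (ℂ × ℂ) := convexHull ℝ hopfOrbit

/-- The real subspace `𝔞 = {(z₁, z₂) : Im z₂ = 0}` of `ℂ²`. -/
def aSection : Set (ℂ × ℂ) := {z | z.2.im = 0}

/-- The orthogonal projection of `ℂ²` (viewed as `ℝ⁴`) onto `𝔞`, killing `Im z₂`. -/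
def projSection (z : ℂ × ℂ) : ℂ × ℂ := (z.1, (z.2.re : ℂ))

/-- The diagonal map as an `ℝ`-linear map. -/
noncomputable def diagMap : ℂ →ₗ[ℝ] ℂ × ℂ := LinearMap.prod LinearMap.id LinearMap.id

lemma hull_subset_diag : hopfHull ⊆ diagMap '' Metric.closedBall (0 : ℂ) 1 := by
  apply convexHull_min
  · rintro z ⟨t, rfl⟩
    exact ⟨Complex.exp (t * Complex.I), by
      simp [Metric.mem_closedBall, Complex.norm_exp_ofReal_mul_I t], rfl⟩
  · exact (convex_closedBall (0 : ℂ) 1).linear_image diagMap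

/-- For the Hopf action of `U(1)` on `ℂ²`, the subspace `𝔞` meets every orbit,
yet for the convex hull `𝒪` of the orbit of `(1,1)`: `𝒪 ∩ 𝔞` is the segment with endpoints
`±(1,1)`, while `Π(𝒪)` contains the curve `{(e^{it}, cos t)}` and hence is not contained in
that segment; so `Π(𝒪)` strictly contains `𝒪 ∩ 𝔞` and Kostant's identity fails. -/
theorem hopf_action_projection_fails :
    (∀ z : ℂ × ℂ, ∃ t : ℝ,
      (Complex.exp (t * Complex.I) * z.1, Complex.exp (t * Complex.I) * z.2) ∈ aSection) ∧
    (hopfHull ∩ aSection = segment ℝ ((1 : ℂ), (1 : ℂ)) ((-1 : ℂ), (-1 : ℂ))) ∧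
    (∀ t : ℝ, (Complex.exp (t * Complex.I), (Real.cos t : ℂ)) ∈ projSection '' hopfHull) ∧
    ¬ (projSection '' hopfHull ⊆ segment ℝ ((1 : ℂ), (1 : ℂ)) ((-1 : ℂ), (-1 : ℂ))) := by
  refine ⟨?_, ?_, ?_, ?_⟩
  · intro z
    refine ⟨-Complex.arg z.2, ?_⟩
    have h : Complex.exp ((-Complex.arg z.2 : ℝ) * Complex.I) * z.2 = (‖z.2‖ : ℂ) :=
      calc Complex.exp ((-z.2.arg : ℝ) * Complex.I) * z.2
          = Complex.exp ((-z.2.arg : ℝ) * Complex.I) *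
            ((‖z.2‖ : ℂ) * Complex.exp ((z.2.arg : ℝ) * Complex.I)) := by
            rw [Complex.norm_mul_exp_arg_mul_I]
        _ = (‖z.2‖ : ℂ) *
            (Complex.exp ((-z.2.arg : ℝ) * Complex.I) * Complex.exp ((z.2.arg : ℝ) * Complex.I)) := by
            ring
        _ = (‖z.2‖ : ℂ) := by
            rw [← Complex.exp_add]
            have : ((-z.2.arg : ℝ) : ℂ) * Complex.I + ((z.2.arg : ℝ) : ℂ) * Complex.I = 0 := by
              push_cast; ring
            rw [this, Complex.exp_zero, mul_one]
    show (Complex.exp ((-Complex.arg z.2 : ℝ) * Complex.I) * z.2).im = 0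
    rw [h]
    simp
  · ext z
    constructor
    · rintro ⟨hz, him⟩
      obtain ⟨w, hw, rfl⟩ := hull_subset_diag hz
      have hw1 : ‖w‖ ≤ 1 := by simpa [Metric.mem_closedBall] using hw
      have himw : w.im = 0 := him
      set x := w.re with hx
      have hwx : w = (x : ℂ) := Complex.ext rfl (by simp [himw])
      have hxabs : |x| ≤ 1 := by
        have := Complex.abs_re_le_norm w
        linarith
      refine ⟨(1 + x) / 2, (1 - x) / 2, ?_, ?_, by ring, ?_⟩
      · have := abs_le.mp hxabs; linarith
      · have := abs_le.mp hxabs; linarith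
      · have : ((1 + x) / 2 : ℝ) • ((1 : ℂ), (1 : ℂ)) + ((1 - x) / 2 : ℝ) • ((-1 : ℂ), (-1 : ℂ))
            = ((x : ℂ), (x : ℂ)) := by
          refine Prod.ext ?_ ?_ <;>
            · simp only [Prod.smul_fst, Prod.smul_snd, Prod.fst_add, Prod.snd_add,
                Complex.real_smul]
              push_cast
              ring
        rw [this, hwx]
        rfl
    · rintro ⟨a, b, ha, hb, hab, rfl⟩
      constructor
      · have h1 : ((1 : ℂ), (1 : ℂ)) ∈ hopfHull := subset_convexHull ℝ _ ⟨0, by simp⟩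
        have h2 : ((-1 : ℂ), (-1 : ℂ)) ∈ hopfHull := subset_convexHull ℝ _ ⟨Real.pi, by
          simp [Complex.exp_pi_mul_I]⟩
        exact (convex_convexHull ℝ _) h1 h2 ha hb hab
      · simp [aSection, Complex.real_smul]
  · intro t
    refine ⟨(Complex.exp (t * Complex.I), Complex.exp (t * Complex.I)),
      subset_convexHull ℝ _ ⟨t, rfl⟩, ?_⟩
    simp [projSection, Complex.exp_ofReal_mul_I_re]
  · intro h
    have hmem : ((Complex.exp ((Real.pi / 2 : ℝ) * Complex.I)), (Real.cos (Real.pi / 2) : ℂ))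
        ∈ projSection '' hopfHull := by
      refine ⟨(Complex.exp ((Real.pi / 2 : ℝ) * Complex.I),
        Complex.exp ((Real.pi / 2 : ℝ) * Complex.I)), subset_convexHull ℝ _ ⟨Real.pi / 2, rfl⟩, ?_⟩
      simp only [projSection, Complex.exp_ofReal_mul_I_re]
    obtain ⟨a, b, ha, hb, hab, heq⟩ := h hmem
    have h1 : (a • ((1 : ℂ), (1 : ℂ)) + b • ((-1 : ℂ), (-1 : ℂ))).1.im = 0 := by
      simp [Complex.real_smul]
    rw [heq] at h1
    have him1 : (Complex.exp ((Real.pi / 2 : ℝ) * Complex.I)).im = 1 := by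
      rw [Complex.exp_ofReal_mul_I_im, Real.sin_pi_div_two]
    have h1' : (Complex.exp ((Real.pi / 2 : ℝ) * Complex.I)).im = 0 := h1
    rw [h1'] at him1
    norm_num at him1
end
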